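/- arXiv:2210.05334 — 14 statements merged into one kernel-verified Lean document; each statement's English description precedes it below -/
import Mathlib

section
/- Let (P,≤,0,1) be a bounded distributive poset and let a,b,c ∈ P. If b and c are both complements of a (i.e., L(a,b)={0}, U(a,b)={1}, L(a,c)={0}, U(a,c)={1}), then b=c. -/
/-- The lower cone of a subset `A` of a poset: all elements below every element of `A`. -/
def lowerCone {P : Type*} [Preorder P] (A : Set P) : Set P := {x | ∀ a ∈ A, x ≤ a}

/-- The upper cone of a subset `A` of a poset: all elements above every element of `A`. -/
def upperCone {P : Type*} [Preorder P] (A : Set P) : Set P := {x | ∀ a ∈ A, a ≤ x}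

/-- A poset is distributive if `L(U(x,y) ∪ {z}) = L(U(L(x,z) ∪ L(y,z)))` for all `x,y,z`. -/
def DistribPoset (P : Type*) [Preorder P] : Prop :=
  ∀ x y z : P,
    lowerCone (upperCone {x, y} ∪ {z}) =
      lowerCone (upperCone (lowerCone {x, z} ∪ lowerCone {y, z}))

/-- In a bounded distributive poset, complements are unique. -/
theorem stmt0 {P : Type*} [PartialOrder P] [BoundedOrder P] (hd : DistribPoset P)
    (a b c : P)
    (h1 : lowerCone {a, b} = {(⊥ : P)}) (h2 : upperCone {a, b} = {(⊤ : P)})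
    (h3 : lowerCone {a, c} = {(⊥ : P)}) (h4 : upperCone {a, c} = {(⊤ : P)}) :
    b = c := by
  have e1 := hd a c b
  have e2 := hd a b c
  rw [h1] at e1
  rw [h3, Set.pair_comm b c] at e2
  have e : lowerCone (upperCone {a, c} ∪ {b}) = lowerCone (upperCone {a, b} ∪ {c}) :=
    e1.trans e2.symm
  have hb : b ∈ lowerCone (upperCone {a, c} ∪ {b} : Set P) := by
    intro u hu
    rcases hu with hu | hu
    · rw [h4] at hu
      rcases hu with rfl
      exact le_top
    · rcases hu with rfl
      exact le_refl _
  have hc : c ∈ lowerCone (upperCone {a, b} ∪ {c} : Set P) := by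
    intro u hu
    rcases hu with hu | hu
    · rw [h2] at hu
      rcases hu with rfl
      exact le_top
    · rcases hu with rfl
      exact le_refl _
  have hbc : b ≤ c := (e ▸ hb) c (Or.inr rfl)
  have hcb : c ≤ b := (e.symm ▸ hc) b (Or.inr rfl)
  exact le_antisymm hbc hcb
end

section
/- Let (P,≤,0,1) be a bounded distributive poset and a,b,a',b' ∈ P. If a≤b, U(a,a')={1} and L(b,b')={0}, then b'≤a'. -/
/-- In a bounded distributive poset, if `a ≤ b`, `U(a,a') = {1}` and `L(b,b') = {0}`,
then `b' ≤ a'`. -/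
theorem stmt1 {P : Type*} [PartialOrder P] [BoundedOrder P] (hd : DistribPoset P)
    (a b a' b' : P) (hab : a ≤ b)
    (h1 : upperCone {a, a'} = {(⊤ : P)}) (h2 : lowerCone {b, b'} = {(⊥ : P)}) :
    b' ≤ a' := by
  have hmem : b' ∈ lowerCone (upperCone {a, a'} ∪ {b'}) := by
    intro c hc
    rcases hc with hc | hc
    · rw [h1] at hc; rw [hc]; exact le_top
    · rw [hc]
  rw [hd a a' b'] at hmem
  apply hmem
  intro c hc
  rcases hc with hc | hc
  · have : c ∈ lowerCone {b, b'} := by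
      intro d hd'
      rcases hd' with rfl | hd'
      · exact le_trans (hc a (Or.inl rfl)) hab
      · rw [Set.mem_singleton_iff] at hd'; rw [hd']
        exact hc b' (Or.inr rfl)
    rw [h2] at this
    rw [this]; exact bot_le
  · exact hc a' (Or.inl rfl)
end

section
/- Every Boolean poset is a generalized orthomodular poset. Precisely: let (B,≤,0,1) be a bounded distributive poset and let ' : B → B assign to each x a complement x' (i.e., L(x,x')={0} and U(x,x')={1} for all x). Then x''=x for all x, x≤y implies y'≤x', and for all x,y∈B with x≤y one has U(y)=U({x}∪L(y,x')). -/
private lemma stmt2_key {B : Type*} [PartialOrder B] [BoundedOrder B] (hd : DistribPoset B)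
    {a b : B} (hU : upperCone {a, b} = {(⊤ : B)}) {z w u : B} (hwz : w ≤ z)
    (hu : ∀ v, v ∈ lowerCone {a, z} ∪ lowerCone {b, z} → v ≤ u) : w ≤ u := by
  have h := hd a b z
  have hw : w ∈ lowerCone (upperCone {a, b} ∪ {z}) := by
    intro t ht
    rcases ht with ht | ht
    · rw [hU, Set.mem_singleton_iff] at ht
      subst ht; exact le_top
    · rw [Set.mem_singleton_iff] at ht
      subst ht; exact hwz
  rw [h] at hw
  exact hw u hu

private lemma stmt2_pairL {B : Type*} [Preorder B] {a b v : B}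
    (h1 : v ≤ a) (h2 : v ≤ b) : v ∈ lowerCone ({a, b} : Set B) := by
  intro t ht
  rcases ht with ht | ht
  · subst ht; exact h1
  · rw [Set.mem_singleton_iff] at ht; subst ht; exact h2

private lemma stmt2_Lbot {B : Type*} [PartialOrder B] [OrderBot B] {a b v : B}
    (h : lowerCone ({a, b} : Set B) = {(⊥ : B)}) (h1 : v ≤ a) (h2 : v ≤ b) : v = ⊥ := by
  have := stmt2_pairL h1 h2
  rw [h, Set.mem_singleton_iff] at this
  exact this

private lemma stmt2_Ucomm {B : Type*} [PartialOrder B] [OrderTop B] {a b : B}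
    (h : upperCone ({a, b} : Set B) = {(⊤ : B)}) :
    upperCone ({b, a} : Set B) = {(⊤ : B)} := by
  rw [Set.pair_comm b a]; exact h

/-- Every Boolean poset (bounded distributive poset where `neg x` is a complement of `x`
for all `x`) is a generalized orthomodular poset: `neg` is an involution, it is antitone,
and the (GOM) law holds. -/
theorem stmt2 {B : Type*} [PartialOrder B] [BoundedOrder B] (hd : DistribPoset B)
    (neg : B → B)
    (hcomp : ∀ x : B, lowerCone {x, neg x} = {(⊥ : B)} ∧ upperCone {x, neg x} = {(⊤ : B)}) :
    (∀ x : B, neg (neg x) = x) ∧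
    (∀ x y : B, x ≤ y → neg y ≤ neg x) ∧
    (∀ x y : B, x ≤ y → upperCone {y} = upperCone ({x} ∪ lowerCone {y, neg x})) := by
  refine ⟨?_, ?_, ?_⟩
  · -- involution
    intro x
    apply le_antisymm
    · -- neg (neg x) ≤ x : use key with pair (x, neg x), z = neg (neg x), w = neg (neg x), u = x
      refine stmt2_key hd (hcomp x).2 (le_refl (neg (neg x))) ?_
      intro v hv
      rcases hv with hv | hv
      · exact hv x (Set.mem_insert _ _)
      · -- v ∈ L{neg x, neg (neg x)} = {⊥}
        have hb : v = ⊥ := stmt2_Lbot (hcomp (neg x)).1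
          (hv (neg x) (Set.mem_insert _ _))
          (hv (neg (neg x)) (Set.mem_insert_of_mem _ rfl))
        subst hb; exact bot_le
    · -- x ≤ neg (neg x) : key with pair (neg (neg x), neg x), z = x, w = x, u = neg (neg x)
      refine stmt2_key hd (stmt2_Ucomm (hcomp (neg x)).2) (le_refl x) ?_
      intro v hv
      rcases hv with hv | hv
      · exact hv (neg (neg x)) (Set.mem_insert _ _)
      · have hb : v = ⊥ := stmt2_Lbot (hcomp x).1
          (hv x (Set.mem_insert_of_mem _ rfl))
          (hv (neg x) (Set.mem_insert _ _))
        subst hb; exact bot_le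
  · -- antitone
    intro x y hxy
    refine stmt2_key hd (hcomp x).2 (le_refl (neg y)) ?_
    intro v hv
    rcases hv with hv | hv
    · -- v ≤ x and v ≤ neg y, so v ≤ y and v ≤ neg y, so v = ⊥
      have hb : v = ⊥ := stmt2_Lbot (hcomp y).1
        (le_trans (hv x (Set.mem_insert _ _)) hxy)
        (hv (neg y) (Set.mem_insert_of_mem _ rfl))
      subst hb; exact bot_le
    · exact hv (neg x) (Set.mem_insert _ _)
  · -- GOM
    intro x y hxy
    ext u
    constructor
    · intro hu t ht
      have hyu : y ≤ u := hu y rfl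
      rcases ht with ht | ht
      · rw [Set.mem_singleton_iff] at ht; subst ht; exact le_trans hxy hyu
      · exact le_trans (ht y (Set.mem_insert _ _)) hyu
    · intro hu t ht
      rw [Set.mem_singleton_iff] at ht; subst ht
      refine stmt2_key hd (hcomp x).2 (le_refl t) ?_
      intro v hv
      rcases hv with hv | hv
      · exact le_trans (hv x (Set.mem_insert _ _))
          (hu x (Set.mem_union_left _ rfl))
      · -- v ∈ L{neg x, t}, so v ∈ L{t, neg x} ⊆ given bounds
        refine hu v (Set.mem_union_right _ ?_)
        exact stmt2_pairL (hv t (Set.mem_insert_of_mem _ rfl)) (hv (neg x) (Set.mem_insert _ _))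
end

section
/- Let (P,≤,',0,1) be an orthomodular poset, and let a,b ∈ P be elements having no supremum. Let g' and h' be two distinct minimal upper bounds of {a,b} (so g and h denote their complements). Then the infima c=h'∧b', d=h'∧a', e=g'∧b', f=g'∧a' exist, and the 18 elements 0, a, b, c, d, e, f, g, h, a', b', c', d', e', f', g', h', 1 are pairwise distinct. -/
/-- An orthomodular poset structure on a bounded poset `P` with unary operation `neg`:
`neg` is an antitone involution which is a complementation, suprema of orthogonal pairs
exist, and the orthomodular law holds. -/
def IsOMP {P : Type*} [PartialOrder P] [BoundedOrder P] (neg : P → P) : Prop :=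
  (∀ x : P, neg (neg x) = x) ∧
  (∀ x y : P, x ≤ y → neg y ≤ neg x) ∧
  (∀ x : P, IsGLB {x, neg x} ⊥ ∧ IsLUB {x, neg x} ⊤) ∧
  (∀ x y : P, x ≤ neg y → ∃ s, IsLUB {x, y} s) ∧
  (∀ x y : P, x ≤ y → ∃ m, IsGLB {y, neg x} m ∧ IsLUB {x, m} y)

/-- If `a, b` have no supremum in an orthomodular poset and `g', h'` are two distinct
minimal upper bounds of `{a,b}` (here `g'` is `u` and `h'` is `v`, so `g = neg u` and
`h = neg v`), then the infima `c = h' ∧ b'`, `d = h' ∧ a'`, `e = g' ∧ b'`, `f = g' ∧ a'`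
exist and the 18 elements `0,a,b,c,d,e,f,g,h,a',b',c',d',e',f',g',h',1` are pairwise
distinct. -/
theorem stmt5 {P : Type*} [PartialOrder P] [BoundedOrder P] (neg : P → P)
    (hP : IsOMP neg) (a b u v : P)
    (hab : ¬ ∃ s, IsLUB {a, b} s)
    (huv : u ≠ v)
    (hu : a ≤ u ∧ b ≤ u ∧ ∀ w, w < u → ¬ (a ≤ w ∧ b ≤ w))
    (hv : a ≤ v ∧ b ≤ v ∧ ∀ w, w < v → ¬ (a ≤ w ∧ b ≤ w)) :
    ∃ c d e f : P,
      IsGLB {v, neg b} c ∧ IsGLB {v, neg a} d ∧ IsGLB {u, neg b} e ∧ IsGLB {u, neg a} f ∧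
      List.Pairwise (fun x y => x ≠ y)
        ([⊥, a, b, c, d, e, f, neg u, neg v,
          neg a, neg b, neg c, neg d, neg e, neg f, u, v, ⊤] : List P) := by
  obtain ⟨hinv, hanti, hcomp, hsupx, hom⟩ := hP
  obtain ⟨hau, hbu, humin⟩ := hu
  obtain ⟨hav, hbv, hvmin⟩ := hv
  have ninj : ∀ x y : P, neg x = neg y → x = y := by
    intro x y h; rw [← hinv x, h, hinv]
  have negle : ∀ x y : P, x ≤ neg y → y ≤ neg x := by
    intro x y h; have := hanti x (neg y) h; rwa [hinv] at this
  have negle2 : ∀ x y : P, neg x ≤ neg y → y ≤ x := by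
    intro x y h; have := hanti _ _ h; rwa [hinv, hinv] at this
  have lb2 : ∀ p q z : P, z ≤ p → z ≤ q → z ∈ lowerBounds ({p, q} : Set P) := by
    intro p q z h1 h2; rintro y (rfl | rfl) <;> assumption
  have ub2 : ∀ p q z : P, p ≤ z → q ≤ z → z ∈ upperBounds ({p, q} : Set P) := by
    intro p q z h1 h2; rintro y (rfl | rfl) <;> assumption
  have lns : ∀ x : P, x ≤ neg x → x = ⊥ := fun x h =>
    le_bot_iff.mp ((hcomp x).1.2 (lb2 _ _ _ le_rfl h))
  have ntop : neg ⊤ = (⊥ : P) := by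
    have h := hanti (neg ⊥) ⊤ le_top
    rw [hinv] at h
    exact le_bot_iff.mp h
  have nbot : neg ⊥ = (⊤ : P) := by rw [← ntop, hinv]
  have negNe : ∀ x y : P, x ≠ y → neg x ≠ neg y := fun x y h hh => h (ninj _ _ hh)
  have flip1 : ∀ x y : P, x ≠ neg y → neg x ≠ y := by
    intro x y h hh; apply h; rw [← hh, hinv]
  have flip2 : ∀ x y : P, x ≠ neg y → y ≠ neg x := by
    intro x y h hh; apply h; rw [hh, hinv]
  have neBotTop : ∀ x : P, x ≠ ⊥ → neg x ≠ ⊤ := by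
    intro x h hh; apply h; rw [← hinv x, hh, ntop]
  have neTopBot : ∀ x : P, x ≠ ⊤ → neg x ≠ ⊥ := by
    intro x h hh; apply h; rw [← hinv x, hh, nbot]
  -- basic incomparabilities
  have hnab : ¬ a ≤ b := fun h =>
    hab ⟨b, ub2 a b b h le_rfl, fun y hy => hy (Set.mem_insert_of_mem _ rfl)⟩
  have hnba : ¬ b ≤ a := fun h =>
    hab ⟨a, ub2 a b a le_rfl h, fun y hy => hy (Set.mem_insert _ _)⟩
  have hnanb : ¬ a ≤ neg b := fun h => hab (hsupx a b h)
  have hnbna : ¬ b ≤ neg a := fun h => hnanb (negle b a h)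
  have hnuv : ¬ u ≤ v := fun h => hvmin u (lt_of_le_of_ne h huv) ⟨hau, hbu⟩
  have hnvu : ¬ v ≤ u := fun h => humin v (lt_of_le_of_ne h (Ne.symm huv)) ⟨hav, hbv⟩
  -- c d e f
  obtain ⟨c, hc, hcL⟩ := hom b v hbv
  obtain ⟨d, hd, hdL⟩ := hom a v hav
  obtain ⟨e, he, heL⟩ := hom b u hbu
  obtain ⟨f, hf, hfL⟩ := hom a u hau
  have hcv : c ≤ v := hc.1 (Set.mem_insert _ _)
  have hcb : c ≤ neg b := hc.1 (Set.mem_insert_of_mem _ rfl)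
  have hdv : d ≤ v := hd.1 (Set.mem_insert _ _)
  have hda : d ≤ neg a := hd.1 (Set.mem_insert_of_mem _ rfl)
  have heu : e ≤ u := he.1 (Set.mem_insert _ _)
  have heb : e ≤ neg b := he.1 (Set.mem_insert_of_mem _ rfl)
  have hfu : f ≤ u := hf.1 (Set.mem_insert _ _)
  have hfa : f ≤ neg a := hf.1 (Set.mem_insert_of_mem _ rfl)
  -- key lemma
  have L1 : ∀ w : P, a ≤ w → b ≤ w → (∀ z, z < w → ¬(a ≤ z ∧ b ≤ z)) →
      ∀ x : P, x ≤ neg a → x ≤ neg b → x ≤ w → x = ⊥ := by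
    intro w haw hbw hmin x hxa hxb hxw
    obtain ⟨m, hm, hmL⟩ := hom x w hxw
    have hmw : m ≤ w := hm.1 (Set.mem_insert _ _)
    have ham : a ≤ m := hm.2 (lb2 _ _ _ haw (negle x a hxa))
    have hbm : b ≤ m := hm.2 (lb2 _ _ _ hbw (negle x b hxb))
    have hmeq : m = w := by
      by_contra hne
      exact hmin m (lt_of_le_of_ne hmw hne) ⟨ham, hbm⟩
    have hwnx : w ≤ neg x := hmeq ▸ hm.1 (Set.mem_insert_of_mem _ rfl)
    exact lns x (le_trans hxw hwnx)
  have L1v := L1 v hav hbv hvmin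
  have L1u := L1 u hau hbu humin
  -- basic ne facts
  have na0 : a ≠ ⊥ := fun h => hnab (h ▸ bot_le)
  have nb0 : b ≠ ⊥ := fun h => hnba (h ▸ bot_le)
  have naT : a ≠ ⊤ := fun h => hnba (h ▸ le_top)
  have nbT : b ≠ ⊤ := fun h => hnab (h ▸ le_top)
  have nuT : u ≠ ⊤ := fun h => hnvu (h ▸ le_top)
  have nvT : v ≠ ⊤ := fun h => hnuv (h ▸ le_top)
  have nu0 : u ≠ ⊥ := fun h => na0 (le_bot_iff.mp (h ▸ hau))
  have nv0 : v ≠ ⊥ := fun h => na0 (le_bot_iff.mp (h ▸ hav))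
  have n0T : (⊥ : P) ≠ ⊤ := fun h => na0 (le_bot_iff.mp (h ▸ le_top))
  -- c d e f ≠ ⊥
  have lubself : ∀ x : P, IsLUB ({x, (⊥:P)} : Set P) x :=
    fun x => ⟨ub2 _ _ _ le_rfl bot_le, fun y hy => hy (Set.mem_insert _ _)⟩
  have cne0 : c ≠ ⊥ := by
    intro h; rw [h] at hcL
    have hvb : v = b := hcL.unique (lubself b)
    exact hnab (hvb ▸ hav)
  have dne0 : d ≠ ⊥ := by
    intro h; rw [h] at hdL
    have hva : v = a := hdL.unique (lubself a)
    exact hnba (hva ▸ hbv)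
  have ene0 : e ≠ ⊥ := by
    intro h; rw [h] at heL
    have hub : u = b := heL.unique (lubself b)
    exact hnab (hub ▸ hau)
  have fne0 : f ≠ ⊥ := by
    intro h; rw [h] at hfL
    have hua : u = a := hfL.unique (lubself a)
    exact hnba (hua ▸ hbu)
  -- c d e f ≠ ⊤ (since ≤ v or u which are not ⊤)
  have cneT : c ≠ ⊤ := fun h => nvT (top_le_iff.mp (h ▸ hcv))
  have dneT : d ≠ ⊤ := fun h => nvT (top_le_iff.mp (h ▸ hdv))
  have eneT : e ≠ ⊤ := fun h => nuT (top_le_iff.mp (h ▸ heu))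
  have fneT : f ≠ ⊤ := fun h => nuT (top_le_iff.mp (h ▸ hfu))
  -- row a
  have nab : a ≠ b := fun h => hnab h.le
  have nac : a ≠ c := fun h => hnanb (h ▸ hcb)
  have nad : a ≠ d := fun h => na0 (lns a (h ▸ hda))
  have nae : a ≠ e := fun h => hnanb (h ▸ heb)
  have naf : a ≠ f := fun h => na0 (lns a (h ▸ hfa))
  have nanu : a ≠ neg u := by
    intro h
    have : u = neg a := by rw [← hinv u, ← h]
    exact hnbna (this ▸ hbu)
  have nanv : a ≠ neg v := by
    intro h
    have : v = neg a := by rw [← hinv v, ← h]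
    exact hnbna (this ▸ hbv)
  have nana : a ≠ neg a := fun h => na0 (lns a h.le)
  have nanb : a ≠ neg b := fun h => hnanb h.le
  have nanc : a ≠ neg c := by
    intro h
    have hcna : c = neg a := by rw [← hinv c, ← h]
    have : neg a ≤ neg b := hcna ▸ hcb
    exact hnba (negle2 a b this)
  have nand : a ≠ neg d := by
    intro h
    have hdna : d = neg a := by rw [← hinv d, ← h]
    rw [hdna] at hdL
    exact nvT ((hcomp a).2.unique hdL).symm
  have nane : a ≠ neg e := by
    intro h
    have hena : e = neg a := by rw [← hinv e, ← h]
    have : neg a ≤ neg b := hena ▸ heb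
    exact hnba (negle2 a b this)
  have nanf : a ≠ neg f := by
    intro h
    have hfna : f = neg a := by rw [← hinv f, ← h]
    rw [hfna] at hfL
    exact nuT ((hcomp a).2.unique hfL).symm
  have nau : a ≠ u := fun h => hnba (h ▸ hbu)
  have nav : a ≠ v := fun h => hnba (h ▸ hbv)
  -- row b
  have nbc : b ≠ c := fun h => nb0 (lns b (h ▸ hcb))
  have nbd : b ≠ d := fun h => hnbna (h ▸ hda)
  have nbe : b ≠ e := fun h => nb0 (lns b (h ▸ heb))
  have nbf : b ≠ f := fun h => hnbna (h ▸ hfa)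
  have nbnu : b ≠ neg u := by
    intro h
    have : u = neg b := by rw [← hinv u, ← h]
    exact hnanb (this ▸ hau)
  have nbnv : b ≠ neg v := by
    intro h
    have : v = neg b := by rw [← hinv v, ← h]
    exact hnanb (this ▸ hav)
  have nbna : b ≠ neg a := fun h => hnbna h.le
  have nbnb : b ≠ neg b := fun h => nb0 (lns b h.le)
  have ncnb : c ≠ neg b := by
    intro h
    rw [h] at hcL
    exact nvT ((hcomp b).2.unique hcL).symm
  have ndnb : d ≠ neg b := by
    intro h
    have : neg b ≤ neg a := h ▸ hda
    exact hnab (negle2 b a this)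
  have nenb : e ≠ neg b := by
    intro h
    rw [h] at heL
    exact nuT ((hcomp b).2.unique heL).symm
  have nfnb : f ≠ neg b := by
    intro h
    have : neg b ≤ neg a := h ▸ hfa
    exact hnab (negle2 b a this)
  have nbu : b ≠ u := fun h => hnab (h ▸ hau)
  have nbv : b ≠ v := fun h => hnab (h ▸ hav)
  -- row c
  have ncd : c ≠ d := fun h => cne0 (L1v c (h ▸ hda) hcb hcv)
  have nce : c ≠ e := by
    intro h
    rw [← h] at heL
    exact huv (heL.unique hcL)
  have ncf : c ≠ f := fun h => cne0 (L1v c (h ▸ hfa) hcb hcv)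
  have ncnu : c ≠ neg u := by
    intro h
    have hna : c ≤ neg a := h ▸ hanti a u hau
    exact cne0 (L1v c hna hcb hcv)
  have ncnv : c ≠ neg v := fun h => cne0 (lns c (by rw [h, hinv]; exact h ▸ hcv))
  have ncna : c ≠ neg a := by
    intro h
    have : neg a ≤ neg b := h ▸ hcb
    exact hnba (negle2 a b this)
  have ncnc : c ≠ neg c := fun h => cne0 (lns c h.le)
  have ncnd : c ≠ neg d := by
    intro h
    have hand : a ≤ neg d := negle d a hda
    rw [← h] at hand
    exact hnanb (le_trans hand hcb)
  have ncne : c ≠ neg e := by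
    intro h
    have hbne : b ≤ neg e := negle e b heb
    rw [← h] at hbne
    exact nb0 (lns b (le_trans hbne hcb))
  have ncnf : c ≠ neg f := by
    intro h
    have hanf : a ≤ neg f := negle f a hfa
    rw [← h] at hanf
    exact hnanb (le_trans hanf hcb)
  have ncu : c ≠ u := fun h => nb0 (lns b (le_trans (h ▸ hbu) hcb))
  have ncv : c ≠ v := fun h => nb0 (lns b (le_trans (h ▸ hbv) hcb))
  -- row d
  have nde : d ≠ e := fun h => dne0 (L1v d hda (h ▸ heb) hdv)
  have ndf : d ≠ f := by
    intro h
    rw [← h] at hfL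
    exact huv (hfL.unique hdL)
  have ndnu : d ≠ neg u := by
    intro h
    have hnb : d ≤ neg b := h ▸ hanti b u hbu
    exact dne0 (L1v d hda hnb hdv)
  have ndnv : d ≠ neg v := fun h => dne0 (lns d (by rw [h, hinv]; exact h ▸ hdv))
  have ndna : d ≠ neg a := by
    intro h
    rw [h] at hdL
    exact nvT ((hcomp a).2.unique hdL).symm
  have ndnd : d ≠ neg d := fun h => dne0 (lns d h.le)
  have ndne : d ≠ neg e := by
    intro h
    have hbne : b ≤ neg e := negle e b heb
    rw [← h] at hbne
    exact hnbna (le_trans hbne hda)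
  have ndnf : d ≠ neg f := by
    intro h
    have hanf : a ≤ neg f := negle f a hfa
    rw [← h] at hanf
    exact na0 (lns a (le_trans hanf hda))
  have ndu : d ≠ u := fun h => na0 (lns a (le_trans (h ▸ hau) hda))
  have ndv : d ≠ v := fun h => na0 (lns a (le_trans (h ▸ hav) hda))
  -- row e
  have nef : e ≠ f := fun h => ene0 (L1u e (h ▸ hfa) heb heu)
  have nenu : e ≠ neg u := fun h => ene0 (lns e (by rw [h, hinv]; exact h ▸ heu))
  have nenv : e ≠ neg v := by
    intro h
    have hna : e ≤ neg a := h ▸ hanti a v hav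
    exact ene0 (L1u e hna heb heu)
  have nena : e ≠ neg a := by
    intro h
    have : neg a ≤ neg b := h ▸ heb
    exact hnba (negle2 a b this)
  have nene : e ≠ neg e := fun h => ene0 (lns e h.le)
  have nenf : e ≠ neg f := by
    intro h
    have hanf : a ≤ neg f := negle f a hfa
    rw [← h] at hanf
    exact hnanb (le_trans hanf heb)
  have neu : e ≠ u := fun h => nb0 (lns b (le_trans (h ▸ hbu) heb))
  have nev : e ≠ v := fun h => nb0 (lns b (le_trans (h ▸ hbv) heb))
  -- row f
  have nfnu : f ≠ neg u := fun h => fne0 (lns f (by rw [h, hinv]; exact h ▸ hfu))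
  have nfnv : f ≠ neg v := by
    intro h
    have hnb : f ≤ neg b := h ▸ hanti b v hbv
    exact fne0 (L1u f hfa hnb hfu)
  have nfna : f ≠ neg a := by
    intro h
    rw [h] at hfL
    exact nuT ((hcomp a).2.unique hfL).symm
  have nfnf : f ≠ neg f := fun h => fne0 (lns f h.le)
  have nfu : f ≠ u := fun h => na0 (lns a (le_trans (h ▸ hau) hfa))
  have nfv : f ≠ v := fun h => na0 (lns a (le_trans (h ▸ hav) hfa))
  -- row neg u / neg v
  have nnunv : neg u ≠ neg v := negNe _ _ huv
  have nnuu : neg u ≠ u := fun h => nu0 (lns u h.symm.le)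
  have nnuv : neg u ≠ v := by
    intro h
    have : a ≤ neg u := h ▸ hav
    exact na0 (le_bot_iff.mp ((hcomp u).1.2 (lb2 _ _ _ hau this)))
  have nnvu : neg v ≠ u := by
    intro h
    have : a ≤ neg v := h ▸ hau
    exact na0 (le_bot_iff.mp ((hcomp v).1.2 (lb2 _ _ _ hav this)))
  have nnvv : neg v ≠ v := fun h => nv0 (lns v h.symm.le)
  -- finish
  refine ⟨c, d, e, f, hc, hd, he, hf, ?_⟩
  have nBa := Ne.symm na0
  simp only [List.pairwise_cons, List.mem_cons, List.not_mem_nil, List.mem_singleton,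
    forall_eq_or_imp, forall_eq, List.Pairwise.nil, and_true, false_implies, implies_true]
  repeat' apply And.intro
  all_goals first
    | assumption
    | (apply Ne.symm; assumption)
    | (first
        | exact negNe _ _ (by assumption)
        | exact Ne.symm (negNe _ _ (by assumption))
        | exact negNe _ _ (Ne.symm (by assumption))
        | exact Ne.symm (negNe _ _ (Ne.symm (by assumption)))
        | exact flip1 _ _ (by assumption)
        | exact Ne.symm (flip1 _ _ (by assumption))
        | exact flip2 _ _ (by assumption)
        | exact Ne.symm (flip2 _ _ (by assumption))
        | exact neBotTop _ (by assumption)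
        | exact Ne.symm (neBotTop _ (by assumption))
        | exact neTopBot _ (by assumption)
        | exact Ne.symm (neTopBot _ (by assumption)))
end

section
/- Let (P,≤,',0,1) be a bounded poset with an antitone involution ' that is a complementation, and suppose P is the horizontal sum of a family of subsets (P_i)_{i∈I} such that each P_i, with the induced order, restricted involution, and bounds 0 and 1, is a generalized orthomodular poset. Then (P,≤,',0,1) is a generalized orthomodular poset. -/
/-- The lower cone of `A` computed inside the subposet `S`. -/
def lowerConeIn {P : Type*} [Preorder P] (S A : Set P) : Set P := {x ∈ S | ∀ a ∈ A, x ≤ a}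

/-- The upper cone of `A` computed inside the subposet `S`. -/
def upperConeIn {P : Type*} [Preorder P] (S A : Set P) : Set P := {x ∈ S | ∀ a ∈ A, a ≤ x}

/-- `(P, ≤, neg, ⊥, ⊤)` is a generalized orthomodular poset: `neg` is an antitone
involution which is a complementation, satisfying the (GOM) law. -/
def IsGOM {P : Type*} [PartialOrder P] [BoundedOrder P] (neg : P → P) : Prop :=
  (∀ x : P, neg (neg x) = x) ∧
  (∀ x y : P, x ≤ y → neg y ≤ neg x) ∧
  (∀ x : P, lowerCone {x, neg x} = {(⊥ : P)} ∧ upperCone {x, neg x} = {(⊤ : P)}) ∧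
  (∀ x y : P, x ≤ y → upperCone {y} = upperCone ({x} ∪ lowerCone {y, neg x}))

/-- The subset `S` (with the induced order, the restriction of `neg` and bounds `⊥, ⊤`)
is a generalized orthomodular poset. -/
def IsGOMOn {P : Type*} [PartialOrder P] [BoundedOrder P] (S : Set P) (neg : P → P) : Prop :=
  (∀ x ∈ S, neg (neg x) = x) ∧
  (∀ x ∈ S, ∀ y ∈ S, x ≤ y → neg y ≤ neg x) ∧
  (∀ x ∈ S, lowerConeIn S {x, neg x} = {(⊥ : P)} ∧ upperConeIn S {x, neg x} = {(⊤ : P)}) ∧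
  (∀ x ∈ S, ∀ y ∈ S, x ≤ y →
    upperConeIn S {y} = upperConeIn S ({x} ∪ lowerConeIn S {y, neg x}))

/-- `P` is the horizontal sum of the family of subsets `B i`: each `B i` contains `⊥, ⊤`
and is closed under `neg`, the union of the `B i` is all of `P`, two distinct members
intersect exactly in `{⊥, ⊤}`, and elements lying in no common member are incomparable. -/
def IsHorizontalSum {P I : Type*} [PartialOrder P] [BoundedOrder P]
    (neg : P → P) (B : I → Set P) : Prop :=
  (∀ i, ⊥ ∈ B i ∧ ⊤ ∈ B i ∧ ∀ x ∈ B i, neg x ∈ B i) ∧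
  (⋃ i, B i) = Set.univ ∧
  (∀ i j, i ≠ j → B i ∩ B j = {⊥, ⊤}) ∧
  (∀ a b : P, (¬ ∃ i, a ∈ B i ∧ b ∈ B i) → ¬ a ≤ b ∧ ¬ b ≤ a)

/-- The horizontal sum of a family of generalized orthomodular posets is a generalized
orthomodular poset. -/
theorem stmt6 {P I : Type*} [PartialOrder P] [BoundedOrder P] [Nonempty I]
    (neg : P → P) (B : I → Set P)
    (hinv : ∀ x : P, neg (neg x) = x)
    (hanti : ∀ x y : P, x ≤ y → neg y ≤ neg x)
    (hcomp : ∀ x : P, lowerCone {x, neg x} = {(⊥ : P)} ∧ upperCone {x, neg x} = {(⊤ : P)})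
    (hhs : IsHorizontalSum neg B)
    (hgom : ∀ i, IsGOMOn (B i) neg) :
    IsGOM neg := by
  obtain ⟨hblk, -, hinter, hincomp⟩ := hhs
  have hnegbot : neg (⊥ : P) = ⊤ := by
    have h := (hcomp ⊥).2
    have hm : neg (⊥ : P) ∈ upperCone {(⊥ : P), neg ⊥} := by
      intro a ha
      rcases ha with rfl | ha
      · exact bot_le
      · simp only [Set.mem_singleton_iff] at ha; rw [ha]
    rw [h] at hm
    exact hm
  have hnegtop : neg (⊤ : P) = ⊥ := by
    rw [← hnegbot, hinv]
  refine ⟨hinv, hanti, hcomp, ?_⟩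
  intro x y hxy
  by_cases hx0 : x = ⊥
  · subst hx0
    ext z
    simp only [upperCone, lowerCone, Set.mem_setOf_eq, Set.mem_union,
      Set.mem_singleton_iff, Set.mem_insert_iff]
    constructor
    · rintro hz a (rfl | ha)
      · exact bot_le
      · exact (ha y (Or.inl rfl)).trans (hz y rfl)
    · rintro hz a rfl
      refine hz a (Or.inr fun b hb => ?_)
      rcases hb with rfl | rfl
      · exact le_refl _
      · rw [hnegbot]; exact le_top
  by_cases hy1 : y = ⊤
  · subst hy1
    ext z
    simp only [upperCone, lowerCone, Set.mem_setOf_eq, Set.mem_union,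
      Set.mem_singleton_iff, Set.mem_insert_iff]
    constructor
    · intro hz a ha
      have hzt : z = ⊤ := top_le_iff.mp (hz ⊤ rfl)
      rw [hzt]; exact le_top
    · intro hz a ha
      rw [ha]
      have hxz : x ≤ z := hz x (Or.inl rfl)
      have hnz : neg x ≤ z := by
        refine hz (neg x) (Or.inr fun b hb => ?_)
        rcases hb with rfl | rfl
        · exact le_top
        · exact le_refl _
      have : z ∈ upperCone {x, neg x} := by
        rintro b (rfl | hb)
        · exact hxz
        · simp only [Set.mem_singleton_iff] at hb; rw [hb]; exact hnz
      rw [(hcomp x).2] at this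
      rw [this]
  -- general case
  have hx1 : x ≠ ⊤ := fun h => hy1 (top_le_iff.mp (h ▸ hxy))
  have hnx0 : neg x ≠ ⊥ := fun h => hx1 (by rw [← hinv x, h, hnegbot])
  have hnx1 : neg x ≠ ⊤ := fun h => hx0 (by rw [← hinv x, h, hnegtop])
  obtain ⟨i, hxi, hyi⟩ : ∃ i, x ∈ B i ∧ y ∈ B i := by
    by_contra h
    exact (hincomp x y h).1 hxy
  have key : ∀ a ∈ B i, a ≠ ⊥ → a ≠ ⊤ → ∀ z : P, (z ≤ a ∨ a ≤ z) → z ∈ B i := by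
    intro a hai ha0 ha1 z hcmp
    by_cases h : ∃ j, z ∈ B j ∧ a ∈ B j
    · obtain ⟨j, hzj, haj⟩ := h
      by_cases hij : j = i
      · exact hij ▸ hzj
      · have := hinter j i hij ▸ (Set.mem_inter haj hai)
        rcases this with h' | h' <;> simp_all
    · rcases hcmp with hc | hc
      · exact absurd hc (hincomp z a h).1
      · exact absurd hc (hincomp z a h).2
  have hy0 : y ≠ ⊥ := fun h => hx0 (le_bot_iff.mp (h ▸ hxy))
  have hnxi : neg x ∈ B i := (hblk i).2.2 x hxi
  have hL : lowerCone {y, neg x} = lowerConeIn (B i) {y, neg x} := by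
    ext z
    simp only [lowerCone, lowerConeIn, Set.mem_setOf_eq]
    constructor
    · intro hz
      refine ⟨key y hyi hy0 hy1 z (Or.inl (hz y (Or.inl rfl))), hz⟩
    · exact fun hz => hz.2
  ext z
  have hUy : z ∈ upperCone {y} ↔ z ∈ upperConeIn (B i) {y} := by
    simp only [upperCone, upperConeIn, Set.mem_setOf_eq]
    constructor
    · intro hz
      exact ⟨key y hyi hy0 hy1 z (Or.inr (hz y rfl)), hz⟩
    · exact fun hz => hz.2
  have hgomi := (hgom i).2.2.2 x hxi y hyi hxy
  have hUr : z ∈ upperCone ({x} ∪ lowerCone {y, neg x}) ↔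
      z ∈ upperConeIn (B i) ({x} ∪ lowerConeIn (B i) {y, neg x}) := by
    simp only [upperCone, upperConeIn, Set.mem_setOf_eq, ← hL]
    constructor
    · intro hz
      exact ⟨key x hxi hx0 hx1 z (Or.inr (hz x (Or.inl rfl))), hz⟩
    · exact fun hz => hz.2
  rw [hUy, hUr, hgomi]
end

section
/- Let (P,≤,',0,1) be a bounded poset with an antitone involution ' that is a complementation, and suppose P is the horizontal sum of a family of subsets (P_i)_{i∈I} with |I|>1 in which at least two distinct members P_j and P_k each have more than two elements. Then P is not a distributive poset; in fact, for a∈P_j∖{0,1} and b∈P_k∖{0,1} with j≠k, L(U(a,a')∪{b}) ≠ L(U(L(a,b)∪L(a',b))). -/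
/-- A horizontal sum of at least two nontrivial bounded posets with antitone involution
that is a complementation is not distributive: in fact for `a ∈ B j \ {⊥,⊤}` and
`b ∈ B k \ {⊥,⊤}` with `j ≠ k` we have
`L(U(a,a') ∪ {b}) ≠ L(U(L(a,b) ∪ L(a',b)))`. -/
theorem stmt7 {P I : Type*} [PartialOrder P] [BoundedOrder P]
    (neg : P → P) (B : I → Set P)
    (hinv : ∀ x : P, neg (neg x) = x)
    (hanti : ∀ x y : P, x ≤ y → neg y ≤ neg x)
    (hcomp : ∀ x : P, lowerCone {x, neg x} = {(⊥ : P)} ∧ upperCone {x, neg x} = {(⊤ : P)})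
    (hhs : IsHorizontalSum neg B)
    (j k : I) (hjk : j ≠ k)
    (hj : ∃ x ∈ B j, x ≠ ⊥ ∧ x ≠ ⊤) (hk : ∃ x ∈ B k, x ≠ ⊥ ∧ x ≠ ⊤) :
    ¬ DistribPoset P ∧
    ∀ a ∈ B j, a ≠ ⊥ → a ≠ ⊤ → ∀ b ∈ B k, b ≠ ⊥ → b ≠ ⊤ →
      lowerCone (upperCone {a, neg a} ∪ {b}) ≠
        lowerCone (upperCone (lowerCone {a, b} ∪ lowerCone {neg a, b})) := by

  obtain ⟨hB, hcov, hdisj, hincomp⟩ := hhs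
  have hnb : neg (⊥ : P) = ⊤ := by
    have h2 := (hcomp (⊥ : P)).2
    have hm : neg (⊥ : P) ∈ upperCone {(⊥ : P), neg ⊥} := by
      intro c hc
      rcases hc with rfl | hc
      · exact bot_le
      · simp at hc; subst hc; exact le_rfl
    rw [h2] at hm
    exact hm
  have hnt : neg (⊤ : P) = ⊥ := by
    rw [← hnb, hinv]
  -- no common block
  have nocommon : ∀ x y : P, x ∈ B j → x ≠ ⊥ → x ≠ ⊤ → y ∈ B k → y ≠ ⊥ → y ≠ ⊤ →
      ¬ ∃ i, x ∈ B i ∧ y ∈ B i := by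
    rintro x y hxj hx0 hx1 hyk hy0 hy1 ⟨i, hxi, hyi⟩
    by_cases hij : i = j
    · subst hij
      have hmem : y ∈ B i ∩ B k := ⟨hyi, hyk⟩
      rw [hdisj i k hjk] at hmem
      rcases hmem with h | h
      · exact hy0 h
      · exact hy1 h
    · have hmem : x ∈ B i ∩ B j := ⟨hxi, hxj⟩
      rw [hdisj i j hij] at hmem
      rcases hmem with h | h
      · exact hx0 h
      · exact hx1 h
  -- key: lower bounds of cross-block pairs are ⊥
  have key : ∀ x y : P, x ∈ B j → x ≠ ⊥ → x ≠ ⊤ → y ∈ B k → y ≠ ⊥ → y ≠ ⊤ →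
      ∀ z : P, z ≤ x → z ≤ y → z = ⊥ := by
    intro x y hxj hx0 hx1 hyk hy0 hy1 z hzx hzy
    by_contra hz0
    have hz1 : z ≠ ⊤ := by
      rintro rfl
      exact hx1 (le_antisymm le_top hzx)
    have hcx : ∃ i, z ∈ B i ∧ x ∈ B i := by
      by_contra h
      exact (hincomp z x h).1 hzx
    have hcy : ∃ i, z ∈ B i ∧ y ∈ B i := by
      by_contra h
      exact (hincomp z y h).1 hzy
    obtain ⟨i, hzi, hxi⟩ := hcx
    obtain ⟨i', hzi', hyi'⟩ := hcy
    by_cases hii : i = i'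
    · subst hii
      exact nocommon x y hxj hx0 hx1 hyk hy0 hy1 ⟨i, hxi, hyi'⟩
    · have hmem : z ∈ B i ∩ B i' := ⟨hzi, hzi'⟩
      rw [hdisj i i' hii] at hmem
      rcases hmem with h | h
      · exact hz0 h
      · exact hz1 h
  have main : ∀ a ∈ B j, a ≠ ⊥ → a ≠ ⊤ → ∀ b ∈ B k, b ≠ ⊥ → b ≠ ⊤ →
      lowerCone (upperCone {a, neg a} ∪ {b}) ≠
        lowerCone (upperCone (lowerCone {a, b} ∪ lowerCone {neg a, b})) := by
    intro a haj ha0 ha1 b hbk hb0 hb1 heq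
    have hnaj : neg a ∈ B j := (hB j).2.2 a haj
    have hna0 : neg a ≠ ⊥ := by
      intro h
      apply ha1
      rw [← hinv a, h, hnb]
    have hna1 : neg a ≠ ⊤ := by
      intro h
      apply ha0
      rw [← hinv a, h, hnt]
    -- b is in the LHS
    have hbL : b ∈ lowerCone (upperCone {a, neg a} ∪ {b}) := by
      intro c hc
      rcases hc with hc | hc
      · rw [(hcomp a).2] at hc
        simp at hc; subst hc; exact le_top
      · simp at hc; subst hc; exact le_rfl
    rw [heq] at hbL
    -- a is an upper bound of L(a,b) ∪ L(neg a, b)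
    have haU : a ∈ upperCone (lowerCone {a, b} ∪ lowerCone {neg a, b}) := by
      intro c hc
      rcases hc with hc | hc
      · exact hc a (by simp)
      · have hc1 : c ≤ neg a := hc (neg a) (by simp)
        have hc2 : c ≤ b := hc b (by simp)
        have := key (neg a) b hnaj hna0 hna1 hbk hb0 hb1 c hc1 hc2
        rw [this]; exact bot_le
    have hba : b ≤ a := hbL a haU
    exact (hincomp a b (nocommon a b haj ha0 ha1 hbk hb0 hb1)).2 hba
  refine ⟨?_, main⟩
  intro hd
  obtain ⟨a, haj, ha0, ha1⟩ := hj
  obtain ⟨b, hbk, hb0, hb1⟩ := hk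
  exact main a haj ha0 ha1 b hbk hb0 hb1 (hd a (neg a) b)
end

section
/- Let (P,≤,',0,1) be a bounded poset with an antitone involution ' that is a complementation which is the horizontal sum of a family of subsets (B_i)_{i∈I} such that each B_i, with the induced order, restricted involution, and bounds 0 and 1, is a Boolean poset. Then (P,≤,',0,1) is a generalized orthomodular poset. -/
/-- The subset `S` (with the induced order, the restriction of `neg` and bounds `⊥, ⊤`)
is a Boolean poset: it is distributive and `neg x` is a complement of `x` within `S`. -/
def IsBooleanOn {P : Type*} [PartialOrder P] [BoundedOrder P] (S : Set P) (neg : P → P) :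
    Prop :=
  (∀ x ∈ S, ∀ y ∈ S, ∀ z ∈ S,
    lowerConeIn S (upperConeIn S {x, y} ∪ {z}) =
      lowerConeIn S (upperConeIn S (lowerConeIn S {x, z} ∪ lowerConeIn S {y, z}))) ∧
  (∀ x ∈ S, lowerConeIn S {x, neg x} = {(⊥ : P)} ∧ upperConeIn S {x, neg x} = {(⊤ : P)})

/-- The horizontal sum of a family of Boolean posets is a generalized orthomodular
poset. -/
theorem stmt8 {P I : Type*} [PartialOrder P] [BoundedOrder P] [Nonempty I]
    (neg : P → P) (B : I → Set P)
    (hinv : ∀ x : P, neg (neg x) = x)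
    (hanti : ∀ x y : P, x ≤ y → neg y ≤ neg x)
    (hcomp : ∀ x : P, lowerCone {x, neg x} = {(⊥ : P)} ∧ upperCone {x, neg x} = {(⊤ : P)})
    (hhs : IsHorizontalSum neg B)
    (hbool : ∀ i, IsBooleanOn (B i) neg) :
    IsGOM neg := by
  obtain ⟨hB, hcover, hdisj, hincomp⟩ := hhs
  refine ⟨hinv, hanti, hcomp, ?_⟩
  intro x y hxy
  apply Set.eq_of_subset_of_subset
  · intro t ht a ha
    have hyt : y ≤ t := ht y rfl
    rcases ha with ha | ha
    · rw [Set.mem_singleton_iff] at ha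
      exact ha ▸ le_trans hxy hyt
    · exact le_trans (ha y (Or.inl rfl)) hyt
  · intro t ht
    have hxt : x ≤ t := ht x (Or.inl rfl)
    have hlow : ∀ a, a ≤ y → a ≤ neg x → a ≤ t := by
      intro a h1 h2
      refine ht a (Or.inr ?_)
      intro b hb
      rcases hb with hb | hb
      · exact hb ▸ h1
      · rw [Set.mem_singleton_iff] at hb; exact hb ▸ h2
    have hsuff : y ≤ t → t ∈ upperCone {y} := by
      intro h a ha
      rw [Set.mem_singleton_iff] at ha
      exact ha ▸ h
    by_cases hx : x = ⊥
    · refine hsuff (hlow y le_rfl ?_)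
      have hnb : neg ⊥ = ⊤ := by
        have h1 : neg ⊥ ∈ upperCone {(⊥ : P), neg ⊥} := by
          intro b hb
          rcases hb with hb | hb
          · rw [hb]; exact bot_le
          · rw [Set.mem_singleton_iff] at hb; exact hb ▸ le_rfl
        rw [(hcomp ⊥).2] at h1
        exact h1
      rw [hx, hnb]
      exact le_top
    by_cases hy : y = ⊤
    · have hnxt : neg x ≤ t := hlow (neg x) (hy ▸ le_top) le_rfl
      have h1 : t ∈ upperCone {x, neg x} := by
        intro b hb
        rcases hb with hb | hb
        · exact hb ▸ hxt
        · rw [Set.mem_singleton_iff] at hb; exact hb ▸ hnxt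
      rw [(hcomp x).2, Set.mem_singleton_iff] at h1
      exact hsuff (by rw [hy, h1])
    by_cases htop : t = ⊤
    · exact hsuff (htop ▸ le_top)
    have hxtop : x ≠ ⊤ := fun h => hy (top_le_iff.mp (h ▸ hxy))
    obtain ⟨i, hxi, hyi⟩ : ∃ i, x ∈ B i ∧ y ∈ B i := by
      by_contra h; exact (hincomp x y h).1 hxy
    obtain ⟨j, hxj, htj⟩ : ∃ j, x ∈ B j ∧ t ∈ B j := by
      by_contra h; exact (hincomp x t h).1 hxt
    have hti : t ∈ B i := by
      by_cases hij : j = i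
      · exact hij ▸ htj
      · have hmem : x ∈ B j ∩ B i := ⟨hxj, hxi⟩
        rw [hdisj j i hij] at hmem
        rcases hmem with h' | h'
        · exact absurd h' hx
        · rw [Set.mem_singleton_iff] at h'; exact absurd h' hxtop
    have hnxi : neg x ∈ B i := (hB i).2.2 x hxi
    obtain ⟨hdist, hcompl⟩ := hbool i
    have key := hdist x hxi (neg x) hnxi y hyi
    have hyL : y ∈ lowerConeIn (B i) (upperConeIn (B i) {x, neg x} ∪ {y}) := by
      refine ⟨hyi, ?_⟩
      intro a ha
      rcases ha with ha | ha
      · rw [(hcompl x hxi).2, Set.mem_singleton_iff] at ha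
        exact ha ▸ le_top
      · rw [Set.mem_singleton_iff] at ha
        exact ha ▸ le_rfl
    rw [key] at hyL
    have htU : t ∈ upperConeIn (B i)
        (lowerConeIn (B i) {x, y} ∪ lowerConeIn (B i) {neg x, y}) := by
      refine ⟨hti, ?_⟩
      intro a ha
      rcases ha with ⟨_, hale⟩ | ⟨_, hale⟩
      · exact le_trans (hale x (Or.inl rfl)) hxt
      · exact hlow a (hale y (Or.inr rfl)) (hale (neg x) (Or.inl rfl))
    exact hsuff (hyL.2 t htU)
end

section
/- Let (B,≤,',0,1) be a Boolean poset (with ' a complementation) and a,b ∈ B. Then a C b, i.e., U(a)=U(L(a,b)∪L(a,b')). -/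
/-- `a` and `b` are compatible: `U(a) = U(L(a,b) ∪ L(a,b'))`. -/
def Compat {P : Type*} [Preorder P] (neg : P → P) (a b : P) : Prop :=
  upperCone {a} = upperCone (lowerCone {a, b} ∪ lowerCone {a, neg b})

lemma uLu {P : Type*} [Preorder P] (S : Set P) :
    upperCone (lowerCone (upperCone S)) = upperCone S := by
  ext x
  constructor
  · intro hx s hs
    exact hx s (fun u hu => hu s hs)
  · intro hx y hy
    exact hy x hx

lemma uL_singleton {P : Type*} [Preorder P] (a : P) :
    upperCone (lowerCone {a}) = upperCone {a} := by
  ext x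
  constructor
  · intro hx c hc
    exact hx c (by intro d hd; simp at hc hd; subst hc hd; exact le_refl _)
  · intro hx y hy
    exact le_trans (hy a (by simp)) (hx a (by simp))

/-- In a Boolean poset any two elements are compatible. -/
theorem stmt10 {B : Type*} [PartialOrder B] [BoundedOrder B] (hd : DistribPoset B)
    (neg : B → B)
    (hcomp : ∀ x : B, lowerCone {x, neg x} = {(⊥ : B)} ∧ upperCone {x, neg x} = {(⊤ : B)})
    (a b : B) :
    Compat neg a b := by
  have h := hd b (neg b) a
  rw [(hcomp b).2] at h
  have hL : lowerCone ({(⊤ : B)} ∪ {a}) = lowerCone {a} := by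
    ext x
    constructor
    · intro hx c hc
      exact hx c (Or.inr hc)
    · intro hx c hc
      rcases hc with hc | hc
      · simp at hc; subst hc; exact le_top
      · exact hx c hc
  rw [hL] at h
  have := congrArg upperCone h
  rw [uL_singleton, uLu] at this
  unfold Compat
  rw [Set.pair_comm b a, Set.pair_comm (neg b) a] at this
  exact this
end

section
/- Let (P,≤,',0,1) be a bounded poset with an antitone involution ' that is a complementation which is the horizontal sum of subsets (B_i)_{i∈I}, each of which (with the induced order, restricted involution, and bounds 0,1) is a Boolean poset, and let a,b ∈ P. Then a C b if and only if there exists some i∈I with a,b ∈ B_i. -/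
/-- In a horizontal sum of Boolean posets, `a C b` holds iff `a` and `b` lie in a common
Boolean block. -/
theorem stmt11 {P I : Type*} [PartialOrder P] [BoundedOrder P]
    (neg : P → P) (B : I → Set P)
    (hinv : ∀ x : P, neg (neg x) = x)
    (hanti : ∀ x y : P, x ≤ y → neg y ≤ neg x)
    (hcomp : ∀ x : P, lowerCone {x, neg x} = {(⊥ : P)} ∧ upperCone {x, neg x} = {(⊤ : P)})
    (hhs : IsHorizontalSum neg B)
    (hbool : ∀ i, IsBooleanOn (B i) neg)
    (a b : P) :
    Compat neg a b ↔ ∃ i, a ∈ B i ∧ b ∈ B i := by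

  obtain ⟨hblk, huniv, hdisj, hincomp⟩ := hhs
  have hmemblock : ∀ x : P, ∃ i, x ∈ B i := by
    intro x
    have hx : x ∈ (⋃ i, B i) := by rw [huniv]; exact Set.mem_univ x
    simpa using hx
  have hle_block : ∀ x y : P, x ≤ y → ∃ i, x ∈ B i ∧ y ∈ B i := by
    intro x y hxy
    by_contra h
    exact (hincomp x y h).1 hxy
  have huniq : ∀ (i j : I) (x : P), x ∈ B i → x ∈ B j → x ≠ ⊥ → x ≠ ⊤ → i = j := by
    intro i j x hxi hxj hx0 hx1
    by_contra hij
    have hx : x ∈ ({⊥, ⊤} : Set P) := by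
      rw [← hdisj i j hij]; exact ⟨hxi, hxj⟩
    rcases hx with h | h
    · exact hx0 h
    · exact hx1 h
  constructor
  · -- Compat → common block
    intro hC
    obtain ⟨i, hai⟩ := hmemblock a
    obtain ⟨j, hbj⟩ := hmemblock b
    by_cases ha0 : a = ⊥
    · exact ⟨j, ha0 ▸ (hblk j).1, hbj⟩
    by_cases ha1 : a = ⊤
    · exact ⟨j, ha1 ▸ (hblk j).2.1, hbj⟩
    by_contra hno
    have hnob' : ¬ ∃ k, a ∈ B k ∧ neg b ∈ B k := by
      rintro ⟨k, hak, hbk⟩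
      refine hno ⟨k, hak, ?_⟩
      have h := (hblk k).2.2 (neg b) hbk
      rwa [hinv] at h
    have hL1 : ∀ x : P, x ≤ a → x ≤ b → x = ⊥ := by
      intro x hxa hxb
      by_contra hx0
      have hx1 : x ≠ ⊤ := by
        intro h
        exact ha1 (top_le_iff.mp (h ▸ hxa))
      obtain ⟨k, hxk, hak⟩ := hle_block x a hxa
      obtain ⟨l, hxl, hbl⟩ := hle_block x b hxb
      have hkl : k = l := huniq k l x hxk hxl hx0 hx1
      exact hno ⟨k, hak, hkl ▸ hbl⟩
    have hL2 : ∀ x : P, x ≤ a → x ≤ neg b → x = ⊥ := by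
      intro x hxa hxb
      by_contra hx0
      have hx1 : x ≠ ⊤ := by
        intro h
        exact ha1 (top_le_iff.mp (h ▸ hxa))
      obtain ⟨k, hxk, hak⟩ := hle_block x a hxa
      obtain ⟨l, hxl, hbl⟩ := hle_block x (neg b) hxb
      have hkl : k = l := huniq k l x hxk hxl hx0 hx1
      exact hnob' ⟨k, hak, hkl ▸ hbl⟩
    have hbotmem : (⊥ : P) ∈ upperCone (lowerCone {a, b} ∪ lowerCone {a, neg b}) := by
      intro y hy
      rcases hy with h | h
      · exact (hL1 y (h a (Or.inl rfl)) (h b (Or.inr rfl))).le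
      · exact (hL2 y (h a (Or.inl rfl)) (h (neg b) (Or.inr rfl))).le
    rw [← hC] at hbotmem
    exact ha0 (le_bot_iff.mp (hbotmem a rfl))
  · -- common block → Compat
    rintro ⟨i, hai, hbi⟩
    by_cases ha0 : a = ⊥
    · subst ha0
      show upperCone {(⊥ : P)} = _
      ext u
      constructor
      · intro _ y hy
        rcases hy with h | h
        · exact le_trans (h ⊥ (Or.inl rfl)) bot_le
        · exact le_trans (h ⊥ (Or.inl rfl)) bot_le
      · intro _ z hz
        rcases hz with rfl
        exact bot_le
    by_cases ha1 : a = ⊤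
    · subst ha1
      show upperCone {(⊤ : P)} = _
      ext u
      constructor
      · intro hu y _
        exact le_trans le_top (hu ⊤ rfl)
      · intro hu
        have hb : b ≤ u := by
          refine hu b (Or.inl ?_)
          intro z hz
          rcases hz with rfl | hz
          · exact le_top
          · rcases hz with rfl
            exact le_rfl
        have hnb : neg b ≤ u := by
          refine hu (neg b) (Or.inr ?_)
          intro z hz
          rcases hz with rfl | hz
          · exact le_top
          · rcases hz with rfl
            exact le_rfl
        have humem : u ∈ upperCone ({b, neg b} : Set P) := by
          intro z hz
          rcases hz with rfl | hz
          · exact hb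
          · rcases hz with rfl
            exact hnb
        rw [(hcomp b).2] at humem
        rcases humem with rfl
        intro z hz
        rcases hz with rfl
        exact le_rfl
    -- general case : a nontrivial
    obtain ⟨hdist, hcompl⟩ := hbool i
    have hnegbi : neg b ∈ B i := (hblk i).2.2 b hbi
    have hdown : ∀ x : P, x ≤ a → x ∈ B i := by
      intro x hxa
      obtain ⟨k, hxk, hak⟩ := hle_block x a hxa
      rwa [huniq k i a hak hai ha0 ha1] at hxk
    set T := B i with hT
    set ST := lowerConeIn T {b, a} ∪ lowerConeIn T {neg b, a} with hST
    have hSrw1 : lowerCone ({a, b} : Set P) = lowerConeIn T {b, a} := by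
      ext x
      constructor
      · intro h
        have hxa : x ≤ a := h a (Or.inl rfl)
        refine ⟨hdown x hxa, ?_⟩
        intro y hy
        rcases hy with rfl | hy
        · exact h _ (Or.inr rfl)
        · rcases hy with rfl
          exact hxa
      · rintro ⟨-, h⟩ y hy
        rcases hy with rfl | hy
        · exact h _ (Or.inr rfl)
        · rcases hy with rfl
          exact h _ (Or.inl rfl)
    have hSrw2 : lowerCone ({a, neg b} : Set P) = lowerConeIn T {neg b, a} := by
      ext x
      constructor
      · intro h
        have hxa : x ≤ a := h a (Or.inl rfl)
        refine ⟨hdown x hxa, ?_⟩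
        intro y hy
        rcases hy with rfl | hy
        · exact h _ (Or.inr rfl)
        · rcases hy with rfl
          exact hxa
      · rintro ⟨-, h⟩ y hy
        rcases hy with rfl | hy
        · exact h _ (Or.inr rfl)
        · rcases hy with rfl
          exact h _ (Or.inl rfl)
    have hSeq : lowerCone ({a, b} : Set P) ∪ lowerCone ({a, neg b} : Set P) = ST := by
      rw [hSrw1, hSrw2]
    have hd := hdist b hbi (neg b) hnegbi a hai
    rw [(hcompl b hbi).2] at hd
    -- hd : lowerConeIn T ({⊤} ∪ {a}) = lowerConeIn T (upperConeIn T ST)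
    have hkey : ∀ x : P, (x ∈ T ∧ x ≤ a) ↔ x ∈ lowerConeIn T (upperConeIn T ST) := by
      intro x
      rw [← hd]
      constructor
      · rintro ⟨hxT, hxa⟩
        refine ⟨hxT, ?_⟩
        intro y hy
        rcases hy with rfl | hy
        · exact le_top
        · rcases hy with rfl
          exact hxa
      · rintro ⟨hxT, h⟩
        exact ⟨hxT, h a (Or.inr rfl)⟩
    have haleU : ∀ u : P, u ∈ upperConeIn T ST → a ≤ u := by
      intro u hu
      have ha' : a ∈ lowerConeIn T (upperConeIn T ST) := (hkey a).mp ⟨hai, le_rfl⟩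
      exact ha'.2 u hu
    have hsex : ∃ s ∈ ST, s ≠ ⊥ := by
      by_contra h
      push_neg at h
      have hbotU : (⊥ : P) ∈ upperConeIn T ST := by
        refine ⟨(hblk i).1, ?_⟩
        intro y hy
        exact (h y hy) ▸ le_rfl
      exact ha0 (le_bot_iff.mp (haleU ⊥ hbotU))
    obtain ⟨s, hs, hs0⟩ := hsex
    have hsTa : s ∈ T ∧ s ≤ a := by
      rcases hs with h | h
      · exact ⟨h.1, h.2 a (Or.inr rfl)⟩
      · exact ⟨h.1, h.2 a (Or.inr rfl)⟩
    have hs1 : s ≠ ⊤ := by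
      intro h
      exact ha1 (top_le_iff.mp (h ▸ hsTa.2))
    show upperCone {a} = upperCone (lowerCone {a, b} ∪ lowerCone {a, neg b})
    ext u
    constructor
    · intro hu y hy
      have hau : a ≤ u := hu a rfl
      have hya : y ≤ a := by
        rcases hy with h | h
        · exact h a (Or.inl rfl)
        · exact h a (Or.inl rfl)
      exact le_trans hya hau
    · intro hu
      have hsu : s ≤ u := hu s (hSeq ▸ hs)
      obtain ⟨k, hsk, huk⟩ := hle_block s u hsu
      have hki : k = i := huniq k i s hsk hsTa.1 hs0 hs1
      subst hki
      have huT : u ∈ upperConeIn T ST := by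
        refine ⟨huk, ?_⟩
        intro y hy
        exact hu y (hSeq ▸ hy)
      intro z hz
      rcases hz with rfl
      exact haleU u huT
end

section
/- Let (B,≤,',0,1) be a Boolean poset (with ' a complementation) and a,b ∈ B. Then c(a,b)={1}, i.e., the set of minimal elements of U(L(a,b)∪L(a,b')∪L(a',b)∪L(a',b')) equals {1}. -/
/-- The set of minimal elements of a subset of a poset. -/
def minSet {P : Type*} [PartialOrder P] (A : Set P) : Set P :=
  {x ∈ A | ∀ y ∈ A, y ≤ x → y = x}

/-- The commutator `c(x,y) = Min U(L(x,y) ∪ L(x,y') ∪ L(x',y) ∪ L(x',y'))`. -/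
def commSet {P : Type*} [PartialOrder P] (neg : P → P) (x y : P) : Set P :=
  minSet (upperCone
    (lowerCone {x, y} ∪ lowerCone {x, neg y} ∪ lowerCone {neg x, y} ∪ lowerCone {neg x, neg y}))

/-- In a Boolean poset the commutator of any two elements is `{1}`. -/
theorem stmt13 {B : Type*} [PartialOrder B] [BoundedOrder B] (hd : DistribPoset B)
    (neg : B → B)
    (hcomp : ∀ x : B, lowerCone {x, neg x} = {(⊥ : B)} ∧ upperCone {x, neg x} = {(⊤ : B)})
    (a b : B) :
    commSet neg a b = {(⊤ : B)} := by
  have hUS : upperCone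
      (lowerCone {a, b} ∪ lowerCone {a, neg b} ∪ lowerCone {neg a, b}
        ∪ lowerCone {neg a, neg b}) = {(⊤ : B)} := by
    ext t
    constructor
    · intro ht
      have main : ∀ z : B,
          (∀ s ∈ lowerCone {b, z} ∪ lowerCone {neg b, z}, s ≤ t) → z ≤ t := by
        intro z hz
        have h := hd b (neg b) z
        have hz' : z ∈ lowerCone (upperCone {b, neg b} ∪ {z}) := by
          intro u hu
          rcases hu with hu | hu
          · rw [(hcomp b).2] at hu
            rw [hu]; exact le_top
          · rw [hu]
        rw [h] at hz'
        exact hz' t hz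
      have ha : a ≤ t := by
        apply main a
        intro s hs
        rcases hs with hs | hs
        · exact ht s (Or.inl (Or.inl (Or.inl (by rwa [Set.pair_comm] at hs))))
        · exact ht s (Or.inl (Or.inl (Or.inr (by rwa [Set.pair_comm] at hs))))
      have hna : neg a ≤ t := by
        apply main (neg a)
        intro s hs
        rcases hs with hs | hs
        · exact ht s (Or.inl (Or.inr (by rwa [Set.pair_comm] at hs)))
        · exact ht s (Or.inr (by rwa [Set.pair_comm] at hs))
      have htop : t ∈ upperCone {a, neg a} := by
        intro u hu
        rcases hu with rfl | hu
        · exact ha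
        · rw [hu]; exact hna
      rw [(hcomp a).2] at htop
      exact htop
    · intro ht
      rw [ht]
      intro s _
      exact le_top
  unfold commSet minSet
  rw [hUS]
  ext t
  constructor
  · rintro ⟨h, -⟩
    exact h
  · intro h
    refine ⟨h, fun y hy _ => ?_⟩
    rw [Set.mem_singleton_iff] at h hy
    rw [hy, h]
end

section
/- Let (P,≤,',0,1) be a bounded poset with an antitone involution ' that is a complementation which is the horizontal sum of subsets (B_i)_{i∈I}, each of which (with the induced order, restricted involution, and bounds 0,1) is a Boolean poset, and let a,b ∈ P. If there exists some i∈I with a,b ∈ B_i then c(a,b)={1}; otherwise c(a,b)={0}. In particular, c(a,b)={1} if and only if there exists some i∈I with a,b ∈ B_i. -/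
lemma mem_lowerCone_pair {P : Type*} [Preorder P] {x p q : P} :
    x ∈ lowerCone {p, q} ↔ x ≤ p ∧ x ≤ q := by
  simp [lowerCone]

lemma mem_upperCone_pair {P : Type*} [Preorder P] {x p q : P} :
    x ∈ upperCone {p, q} ↔ p ≤ x ∧ q ≤ x := by
  simp [upperCone]

lemma mem_upperCone_iff {P : Type*} [Preorder P] {x : P} {A : Set P} :
    x ∈ upperCone A ↔ ∀ a ∈ A, a ≤ x := Iff.rfl

lemma minSet_singleton_top {P : Type*} [PartialOrder P] [BoundedOrder P] :
    minSet ({⊤} : Set P) = {⊤} := by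
  ext x
  constructor
  · rintro ⟨hx, -⟩; exact hx
  · rintro rfl; exact ⟨rfl, fun y hy _ => hy⟩

lemma minSet_of_bot_mem {P : Type*} [PartialOrder P] [OrderBot P] {A : Set P}
    (h : ⊥ ∈ A) : minSet A = {⊥} := by
  ext x
  constructor
  · rintro ⟨hx, hmin⟩
    exact (hmin ⊥ h bot_le).symm
  · rintro rfl
    exact ⟨h, fun y _ hy => le_bot_iff.mp hy⟩

/-- In a horizontal sum of Boolean posets, the commutator of `a` and `b` is `{1}` if
`a` and `b` lie in a common Boolean block, and `{0}` otherwise; in particular,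
`c(a,b) = {1}` iff `a` and `b` lie in a common block. -/
theorem stmt14 {P I : Type*} [PartialOrder P] [BoundedOrder P]
    (neg : P → P) (B : I → Set P)
    (hinv : ∀ x : P, neg (neg x) = x)
    (hanti : ∀ x y : P, x ≤ y → neg y ≤ neg x)
    (hcomp : ∀ x : P, lowerCone {x, neg x} = {(⊥ : P)} ∧ upperCone {x, neg x} = {(⊤ : P)})
    (hhs : IsHorizontalSum neg B)
    (hbool : ∀ i, IsBooleanOn (B i) neg)
    (a b : P) :
    ((∃ i, a ∈ B i ∧ b ∈ B i) → commSet neg a b = {(⊤ : P)}) ∧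
    ((¬ ∃ i, a ∈ B i ∧ b ∈ B i) → commSet neg a b = {(⊥ : P)}) ∧
    (commSet neg a b = {(⊤ : P)} ↔ ∃ i, a ∈ B i ∧ b ∈ B i) := by
  obtain ⟨hBcl, hUnion, hInter, hIncomp⟩ := hhs
  have hblock : ∀ x y : P, x ≤ y → ∃ j, x ∈ B j ∧ y ∈ B j := by
    intro x y hxy
    by_contra h
    exact (hIncomp x y h).1 hxy
  have hmemB : ∀ x : P, ∃ j, x ∈ B j := by
    intro x
    have hx : x ∈ ⋃ i, B i := hUnion ▸ Set.mem_univ x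
    simpa using hx
  have huniq : ∀ {x : P} {j k : I}, x ∈ B j → x ∈ B k → x ≠ ⊥ → x ≠ ⊤ → j = k := by
    intro x j k hj hk h0 h1
    by_contra hjk
    have hx : x ∈ B j ∩ B k := ⟨hj, hk⟩
    rw [hInter j k hjk] at hx
    rcases hx with h | h
    · exact h0 h
    · exact h1 h
  have ntop : neg (⊤ : P) = ⊥ := by
    have h := (hcomp ⊤).1
    have hm : neg (⊤ : P) ∈ lowerCone {(⊤ : P), neg ⊤} :=
      mem_lowerCone_pair.mpr ⟨le_top, le_refl _⟩
    rw [h] at hm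
    exact hm
  have nbot : neg (⊥ : P) = ⊤ := by
    have h := (hcomp ⊥).2
    have hm : neg (⊥ : P) ∈ upperCone {(⊥ : P), neg ⊥} :=
      mem_upperCone_pair.mpr ⟨bot_le, le_refl _⟩
    rw [h] at hm
    exact hm
  -- the big union
  set S : Set P := lowerCone {a, b} ∪ lowerCone {a, neg b} ∪ lowerCone {neg a, b} ∪
      lowerCone {neg a, neg b} with hS
  have hcommS : commSet neg a b = minSet (upperCone S) := rfl
  -- helper: if c and neg c are both in S then U(S) = {⊤}
  have hUtop : ∀ c : P, c ∈ S → neg c ∈ S → upperCone S = {(⊤ : P)} := by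
    intro c hc hnc
    ext u
    constructor
    · intro hu
      have h1 : c ≤ u := hu c hc
      have h2 : neg c ≤ u := hu (neg c) hnc
      have : u ∈ upperCone {c, neg c} := mem_upperCone_pair.mpr ⟨h1, h2⟩
      rw [(hcomp c).2] at this
      exact this
    · rintro rfl
      exact fun s _ => le_top
  -- Claim 1
  have claim1 : (∃ i, a ∈ B i ∧ b ∈ B i) → upperCone S = {(⊤ : P)} := by
    rintro ⟨i, hai, hbi⟩
    by_cases ha1 : a = ⊤
    · subst ha1
      refine hUtop b ?_ ?_
      · exact Or.inl (Or.inl (Or.inl (mem_lowerCone_pair.mpr ⟨le_top, le_refl _⟩)))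
      · exact Or.inl (Or.inl (Or.inr (mem_lowerCone_pair.mpr ⟨le_top, le_refl _⟩)))
    by_cases ha0 : a = ⊥
    · subst ha0
      refine hUtop b ?_ ?_
      · exact Or.inl (Or.inr (mem_lowerCone_pair.mpr ⟨nbot ▸ le_top, le_refl _⟩))
      · exact Or.inr (mem_lowerCone_pair.mpr ⟨nbot ▸ le_top, le_refl _⟩)
    by_cases hb1 : b = ⊤
    · subst hb1
      refine hUtop a ?_ ?_
      · exact Or.inl (Or.inl (Or.inl (mem_lowerCone_pair.mpr ⟨le_refl _, le_top⟩)))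
      · exact Or.inl (Or.inr (mem_lowerCone_pair.mpr ⟨le_refl _, le_top⟩))
    by_cases hb0 : b = ⊥
    · subst hb0
      refine hUtop a ?_ ?_
      · exact Or.inl (Or.inl (Or.inr (mem_lowerCone_pair.mpr ⟨le_refl _, nbot ▸ le_top⟩)))
      · exact Or.inr (mem_lowerCone_pair.mpr ⟨le_refl _, nbot ▸ le_top⟩)
    -- nontrivial case
    have hna0 : neg a ≠ ⊥ := fun h => ha1 (by rw [← hinv a, h, nbot])
    have hna1 : neg a ≠ ⊤ := fun h => ha0 (by rw [← hinv a, h, ntop])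
    have hnai : neg a ∈ B i := (hBcl i).2.2 a hai
    have hnbi : neg b ∈ B i := (hBcl i).2.2 b hbi
    -- key: for nontrivial c ∈ B i ...
    have key : ∀ c : P, c ∈ B i → c ≠ ⊥ → c ≠ ⊤ →
        (∃ x ∈ lowerCone {c, b} ∪ lowerCone {c, neg b}, x ≠ ⊥) ∧
        (∀ u : P, (∀ s ∈ lowerCone {c, b} ∪ lowerCone {c, neg b}, s ≤ u) → u ∈ B i →
          c ≤ u) := by
      intro c hc hc0 hc1
      have hsubc : ∀ x : P, x ≤ c → x ∈ B i := by
        intro x hx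
        obtain ⟨j, hxj, hcj⟩ := hblock x c hx
        exact (huniq hcj hc hc0 hc1) ▸ hxj
      have e1 : lowerConeIn (B i) {b, c} = lowerCone {c, b} := by
        ext x
        constructor
        · rintro ⟨-, hx⟩
          exact mem_lowerCone_pair.mpr ⟨hx c (by simp), hx b (by simp)⟩
        · intro hx
          obtain ⟨hxc, hxb⟩ := mem_lowerCone_pair.mp hx
          refine ⟨hsubc x hxc, ?_⟩
          intro t ht
          rcases ht with rfl | ht
          · exact hxb
          · simp only [Set.mem_singleton_iff] at ht; subst ht; exact hxc
      have e2 : lowerConeIn (B i) {neg b, c} = lowerCone {c, neg b} := by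
        ext x
        constructor
        · rintro ⟨-, hx⟩
          exact mem_lowerCone_pair.mpr ⟨hx c (by simp), hx (neg b) (by simp)⟩
        · intro hx
          obtain ⟨hxc, hxb⟩ := mem_lowerCone_pair.mp hx
          refine ⟨hsubc x hxc, ?_⟩
          intro t ht
          rcases ht with rfl | ht
          · exact hxb
          · simp only [Set.mem_singleton_iff] at ht; subst ht; exact hxc
      have hd := (hbool i).1 b hbi (neg b) hnbi c hc
      rw [((hbool i).2 b hbi).2, e1, e2] at hd
      have hcmem : c ∈ lowerConeIn (B i) (({(⊤ : P)} : Set P) ∪ {c}) := by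
        refine ⟨hc, ?_⟩
        intro t ht
        rcases ht with ht | ht
        · simp only [Set.mem_singleton_iff] at ht; subst ht; exact le_top
        · simp only [Set.mem_singleton_iff] at ht; subst ht; exact le_refl _
      rw [hd] at hcmem
      obtain ⟨-, hckey⟩ := hcmem
      constructor
      · by_contra hno
        push_neg at hno
        have hb0' : (⊥ : P) ∈ upperConeIn (B i)
            (lowerCone {c, b} ∪ lowerCone {c, neg b}) := by
          refine ⟨(hBcl i).1, ?_⟩
          intro s hs
          rw [hno s hs]
        exact hc0 (le_bot_iff.mp (hckey ⊥ hb0'))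
      · intro u hu huB
        exact hckey u ⟨huB, hu⟩
    obtain ⟨⟨x, hxmem, hx0⟩, hkeya⟩ := key a hai ha0 ha1
    obtain ⟨-, hkeyna⟩ := key (neg a) hnai hna0 hna1
    ext u
    constructor
    · intro hu
      -- u is in B i
      have hxa : x ≤ a := by
        rcases hxmem with hx | hx
        · exact (mem_lowerCone_pair.mp hx).1
        · exact (mem_lowerCone_pair.mp hx).1
      have hx1 : x ≠ ⊤ := fun h => ha1 (top_le_iff.mp (h ▸ hxa))
      have hxBi : x ∈ B i := by
        obtain ⟨j, hxj, haj⟩ := hblock x a hxa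
        exact (huniq haj hai ha0 ha1) ▸ hxj
      have hxu : x ≤ u := by
        rcases hxmem with hx | hx
        · exact hu x (Or.inl (Or.inl (Or.inl hx)))
        · exact hu x (Or.inl (Or.inl (Or.inr hx)))
      have huBi : u ∈ B i := by
        obtain ⟨j, hxj, huj⟩ := hblock x u hxu
        rwa [huniq hxj hxBi hx0 hx1] at huj
      have hau : a ≤ u := by
        refine hkeya u ?_ huBi
        intro s hs
        rcases hs with hs | hs
        · exact hu s (Or.inl (Or.inl (Or.inl hs)))
        · exact hu s (Or.inl (Or.inl (Or.inr hs)))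
      have hnau : neg a ≤ u := by
        refine hkeyna u ?_ huBi
        intro s hs
        rcases hs with hs | hs
        · exact hu s (Or.inl (Or.inr hs))
        · exact hu s (Or.inr hs)
      have : u ∈ upperCone {a, neg a} := mem_upperCone_pair.mpr ⟨hau, hnau⟩
      rw [(hcomp a).2] at this
      exact this
    · rintro rfl
      exact fun s _ => le_top
  -- Claim 2
  have claim2 : (¬ ∃ i, a ∈ B i ∧ b ∈ B i) → (⊥ : P) ∈ upperCone S := by
    intro h
    have hnc : ∀ x y : P, (x = a ∨ x = neg a) → (y = b ∨ y = neg b) →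
        ¬ ∃ j, x ∈ B j ∧ y ∈ B j := by
      rintro x y hx hy ⟨j, hxj, hyj⟩
      refine h ⟨j, ?_, ?_⟩
      · rcases hx with rfl | rfl
        · exact hxj
        · rw [← hinv a]; exact (hBcl j).2.2 _ hxj
      · rcases hy with rfl | rfl
        · exact hyj
        · rw [← hinv b]; exact (hBcl j).2.2 _ hyj
    have hbot : ∀ x y s : P, (x = a ∨ x = neg a) → (y = b ∨ y = neg b) →
        s ≤ x → s ≤ y → s = ⊥ := by
      intro x y s hx hy hsx hsy
      by_contra hs0
      by_cases hs1 : s = ⊤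
      · subst hs1
        have hx1 : x = ⊤ := top_le_iff.mp hsx
        obtain ⟨j, hyj⟩ := hmemB y
        exact hnc x y hx hy ⟨j, hx1 ▸ (hBcl j).2.1, hyj⟩
      · obtain ⟨j, hsj, hxj⟩ := hblock s x hsx
        obtain ⟨k, hsk, hyk⟩ := hblock s y hsy
        exact hnc x y hx hy ⟨j, hxj, huniq hsk hsj hs0 hs1 ▸ hyk⟩
    intro s hs
    rcases hs with ((hs | hs) | hs) | hs
    · obtain ⟨h1, h2⟩ := mem_lowerCone_pair.mp hs
      exact le_of_eq (hbot a b s (Or.inl rfl) (Or.inl rfl) h1 h2)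
    · obtain ⟨h1, h2⟩ := mem_lowerCone_pair.mp hs
      exact le_of_eq (hbot a (neg b) s (Or.inl rfl) (Or.inr rfl) h1 h2)
    · obtain ⟨h1, h2⟩ := mem_lowerCone_pair.mp hs
      exact le_of_eq (hbot (neg a) b s (Or.inr rfl) (Or.inl rfl) h1 h2)
    · obtain ⟨h1, h2⟩ := mem_lowerCone_pair.mp hs
      exact le_of_eq (hbot (neg a) (neg b) s (Or.inr rfl) (Or.inr rfl) h1 h2)
  -- assemble
  have part1 : (∃ i, a ∈ B i ∧ b ∈ B i) → commSet neg a b = {(⊤ : P)} := by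
    intro h
    rw [hcommS, claim1 h, minSet_singleton_top]
  have part2 : (¬ ∃ i, a ∈ B i ∧ b ∈ B i) → commSet neg a b = {(⊥ : P)} := by
    intro h
    rw [hcommS, minSet_of_bot_mem (claim2 h)]
  refine ⟨part1, part2, ⟨?_, part1⟩⟩
  intro hc
  by_contra h
  have h2 := part2 h
  rw [hc] at h2
  have hbt : (⊤ : P) = ⊥ := Set.singleton_eq_singleton_iff.mp h2
  exact (hIncomp a b h).1 (le_trans le_top (hbt ▸ bot_le))
end

section
/- Let (P,≤,',0,1) be a generalized orthomodular poset. Then the following are equivalent: (i) c(x,y) ∈ {{0},{1}} for all x,y∈P; (ii) for all x,y∈P, either L(x,y)=L(x,y')=L(x',y)=L(x',y')={0}, or U(L(x,y)∪L(x,y')∪L(x',y)∪L(x',y'))={1}. -/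
lemma botMemLowerCone {P : Type*} [PartialOrder P] [OrderBot P] (A : Set P) :
    (⊥ : P) ∈ lowerCone A := fun _ _ => bot_le

/-- In a generalized orthomodular poset, all commutators lie in `{{0},{1}}` iff for all
`x, y` either all four lower cones are `{0}` or the upper cone of their union is `{1}`. -/
theorem stmt15 {P : Type*} [PartialOrder P] [BoundedOrder P] (neg : P → P)
    (hgom : IsGOM neg) :
    (∀ x y : P, commSet neg x y = {(⊥ : P)} ∨ commSet neg x y = {(⊤ : P)}) ↔
    (∀ x y : P,
      (lowerCone {x, y} = {(⊥ : P)} ∧ lowerCone {x, neg y} = {(⊥ : P)} ∧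
        lowerCone {neg x, y} = {(⊥ : P)} ∧ lowerCone {neg x, neg y} = {(⊥ : P)}) ∨
      upperCone (lowerCone {x, y} ∪ lowerCone {x, neg y} ∪ lowerCone {neg x, y} ∪
        lowerCone {neg x, neg y}) = {(⊤ : P)}) := by
  constructor
  · intro h x y
    set S : Set P := lowerCone {x, y} ∪ lowerCone {x, neg y} ∪ lowerCone {neg x, y} ∪
        lowerCone {neg x, neg y} with hS
    rcases h x y with hc | hc
    · left
      have hbot : (⊥ : P) ∈ commSet neg x y := by rw [hc]; rfl
      have hU : (⊥ : P) ∈ upperCone S := hbot.1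
      have hsub : ∀ s ∈ S, s = (⊥ : P) := fun s hs => le_bot_iff.mp (hU s hs)
      refine ⟨?_, ?_, ?_, ?_⟩ <;>
        · apply Set.eq_singleton_iff_unique_mem.mpr
          refine ⟨botMemLowerCone _, fun a ha => ?_⟩
          apply hsub
          simp only [hS, Set.mem_union]
          tauto
    · right
      have htop : (⊤ : P) ∈ commSet neg x y := by rw [hc]; rfl
      apply Set.eq_singleton_iff_unique_mem.mpr
      exact ⟨fun a _ => le_top, fun u hu => htop.2 u hu le_top⟩
  · intro h x y
    set S : Set P := lowerCone {x, y} ∪ lowerCone {x, neg y} ∪ lowerCone {neg x, y} ∪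
        lowerCone {neg x, neg y} with hS
    rcases h x y with ⟨h1, h2, h3, h4⟩ | hU
    · left
      have hsub : ∀ s ∈ S, s = (⊥ : P) := by
        intro s hs
        simp only [hS, Set.mem_union] at hs
        rcases hs with ((hs | hs) | hs) | hs
        · rw [h1] at hs; exact hs
        · rw [h2] at hs; exact hs
        · rw [h3] at hs; exact hs
        · rw [h4] at hs; exact hs
      have hbotU : (⊥ : P) ∈ upperCone S := fun a ha => (hsub a ha) ▸ le_rfl
      apply Set.eq_singleton_iff_unique_mem.mpr
      refine ⟨⟨hbotU, fun v _ hv => le_bot_iff.mp hv⟩, fun u hu => ?_⟩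
      exact (hu.2 ⊥ hbotU bot_le).symm
    · right
      apply Set.eq_singleton_iff_unique_mem.mpr
      have htopU : (⊤ : P) ∈ upperCone S := by rw [hU]; rfl
      refine ⟨⟨htopU, fun v hv _ => ?_⟩, fun u hu => ?_⟩
      · rw [hU] at hv; exact hv
      · have := hu.1; rw [hU] at this; exact this
end

section
/- Let (P,≤,',0,1) be a bounded poset with an antitone involution ' that is a complementation which is the horizontal sum of subsets (B_i)_{i∈I}, each of which (with the induced order, restricted involution, and bounds 0,1) is a Boolean poset. Then for all x,y,z ∈ P one has c(c(x,y),z)={1}, where for subsets A,B⊆P the commutator is extended by c(A,B) := ⋃_{a∈A, b∈B} c(a,b). -/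
/-- The commutator extended to subsets: `c(A,B) = ⋃_{a ∈ A, b ∈ B} c(a,b)`. -/
def commSetSet {P : Type*} [PartialOrder P] (neg : P → P) (A B : Set P) : Set P :=
  ⋃ a ∈ A, ⋃ b ∈ B, commSet neg a b

section Aux

set_option linter.unusedSectionVars false

variable {P : Type*} [PartialOrder P] [BoundedOrder P]

lemma mem_lc_pair {a b c : P} : c ∈ lowerCone {a, b} ↔ c ≤ a ∧ c ≤ b := by
  simp [lowerCone]

lemma mem_uc_pair {a b c : P} : c ∈ upperCone {a, b} ↔ a ≤ c ∧ b ≤ c := by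
  simp [upperCone]

lemma minSet_singleton (a : P) : minSet {a} = {a} := by
  ext x
  simp only [minSet, Set.mem_setOf_eq, Set.mem_singleton_iff]
  constructor
  · rintro ⟨h, _⟩; exact h
  · rintro rfl; exact ⟨rfl, fun y hy _ => hy⟩

lemma minSet_univ : minSet (Set.univ : Set P) = {⊥} := by
  ext x
  simp only [minSet, Set.mem_univ, Set.mem_setOf_eq, true_and, Set.mem_singleton_iff]
  constructor
  · intro h; exact (h ⊥ trivial bot_le).symm
  · rintro rfl; intro y _ hy; exact le_bot_iff.mp hy

variable {neg : P → P}

lemma mem_uc4 {x y u : P} :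
    u ∈ upperCone (lowerCone {x, y} ∪ lowerCone {x, neg y} ∪ lowerCone {neg x, y}
      ∪ lowerCone {neg x, neg y}) ↔
    ∀ c : P, ((c ≤ x ∧ c ≤ y) ∨ (c ≤ x ∧ c ≤ neg y) ∨ (c ≤ neg x ∧ c ≤ y)
      ∨ (c ≤ neg x ∧ c ≤ neg y)) → c ≤ u := by
  simp only [upperCone, lowerCone, Set.mem_union, Set.mem_setOf_eq, Set.mem_insert_iff,
    Set.mem_singleton_iff, forall_eq_or_imp, forall_eq]
  constructor
  · intro h c hc
    exact h c (by tauto)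
  · intro h c hc
    exact h c (by tauto)

lemma eq_top_of_double
    (hcomp : ∀ x : P, lowerCone {x, neg x} = {(⊥ : P)} ∧ upperCone {x, neg x} = {(⊤ : P)})
    (u b : P) (h1 : b ≤ u) (h2 : neg b ≤ u) : u = ⊤ := by
  have h : u ∈ upperCone {b, neg b} := mem_uc_pair.mpr ⟨h1, h2⟩
  rw [(hcomp b).2] at h
  exact h

lemma neg_bot_eq
    (hcomp : ∀ x : P, lowerCone {x, neg x} = {(⊥ : P)} ∧ upperCone {x, neg x} = {(⊤ : P)}) :
    neg ⊥ = ⊤ :=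
  eq_top_of_double hcomp (neg ⊥) ⊥ bot_le le_rfl

lemma neg_top_eq
    (hcomp : ∀ x : P, lowerCone {x, neg x} = {(⊥ : P)} ∧ upperCone {x, neg x} = {(⊤ : P)}) :
    neg ⊤ = ⊥ := by
  have h : neg ⊤ ∈ lowerCone {⊤, neg ⊤} := mem_lc_pair.mpr ⟨le_top, le_rfl⟩
  rw [(hcomp ⊤).1] at h
  exact h

lemma commSet_left_trivial
    (hcomp : ∀ x : P, lowerCone {x, neg x} = {(⊥ : P)} ∧ upperCone {x, neg x} = {(⊤ : P)})
    (x y : P) (hx : x = ⊥ ∨ x = ⊤) : commSet neg x y = {⊤} := by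
  have huc : upperCone (lowerCone {x, y} ∪ lowerCone {x, neg y} ∪ lowerCone {neg x, y}
      ∪ lowerCone {neg x, neg y}) = {⊤} := by
    ext u
    simp only [Set.mem_singleton_iff]
    constructor
    · intro hu
      rw [mem_uc4] at hu
      rcases hx with rfl | rfl
      · have hnx : neg (⊥ : P) = ⊤ := neg_bot_eq hcomp
        have h1 : y ≤ u := hu y (Or.inr (Or.inr (Or.inl ⟨by rw [hnx]; exact le_top, le_rfl⟩)))
        have h2 : neg y ≤ u := hu (neg y)
          (Or.inr (Or.inr (Or.inr ⟨by rw [hnx]; exact le_top, le_rfl⟩)))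
        exact eq_top_of_double hcomp u y h1 h2
      · have h1 : y ≤ u := hu y (Or.inl ⟨le_top, le_rfl⟩)
        have h2 : neg y ≤ u := hu (neg y) (Or.inr (Or.inl ⟨le_top, le_rfl⟩))
        exact eq_top_of_double hcomp u y h1 h2
    · rintro rfl
      rw [mem_uc4]
      intro c _
      exact le_top
  rw [commSet, huc, minSet_singleton]

lemma commSet_right_trivial
    (hcomp : ∀ x : P, lowerCone {x, neg x} = {(⊥ : P)} ∧ upperCone {x, neg x} = {(⊤ : P)})
    (x y : P) (hy : y = ⊥ ∨ y = ⊤) : commSet neg x y = {⊤} := by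
  have huc : upperCone (lowerCone {x, y} ∪ lowerCone {x, neg y} ∪ lowerCone {neg x, y}
      ∪ lowerCone {neg x, neg y}) = {⊤} := by
    ext u
    simp only [Set.mem_singleton_iff]
    constructor
    · intro hu
      rw [mem_uc4] at hu
      rcases hy with rfl | rfl
      · have hny : neg (⊥ : P) = ⊤ := neg_bot_eq hcomp
        have h1 : x ≤ u := hu x (Or.inr (Or.inl ⟨le_rfl, by rw [hny]; exact le_top⟩))
        have h2 : neg x ≤ u := hu (neg x)
          (Or.inr (Or.inr (Or.inr ⟨le_rfl, by rw [hny]; exact le_top⟩)))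
        exact eq_top_of_double hcomp u x h1 h2
      · have h1 : x ≤ u := hu x (Or.inl ⟨le_rfl, le_top⟩)
        have h2 : neg x ≤ u := hu (neg x) (Or.inr (Or.inr (Or.inl ⟨le_rfl, le_top⟩)))
        exact eq_top_of_double hcomp u x h1 h2
    · rintro rfl
      rw [mem_uc4]
      intro c _
      exact le_top
  rw [commSet, huc, minSet_singleton]

end Aux

section Main

variable {P I : Type*} [PartialOrder P] [BoundedOrder P] {neg : P → P} {B : I → Set P}

lemma share_block (hhs : IsHorizontalSum neg B) {a b : P} (hab : a ≤ b) :
    ∃ i, a ∈ B i ∧ b ∈ B i := by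
  by_contra h
  exact (hhs.2.2.2 a b h).1 hab

lemma block_of_comparable (hhs : IsHorizontalSum neg B) {i : I} {s u : P}
    (hs : s ∈ B i) (hsb : s ≠ ⊥) (hst : s ≠ ⊤) (h : s ≤ u ∨ u ≤ s) : u ∈ B i := by
  have hshare : ∃ j, s ∈ B j ∧ u ∈ B j := by
    rcases h with h | h
    · exact share_block hhs h
    · obtain ⟨j, h1, h2⟩ := share_block hhs h
      exact ⟨j, h2, h1⟩
  obtain ⟨j, hsj, huj⟩ := hshare
  by_cases hij : j = i
  · exact hij ▸ huj
  · exfalso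
    have hmem : s ∈ B i ∩ B j := ⟨hs, hsj⟩
    rw [hhs.2.2.1 i j (Ne.symm hij)] at hmem
    rcases hmem with h' | h'
    · exact hsb h'
    · exact hst h'

lemma ucIn_pair_top
    (hcomp : ∀ x : P, lowerCone {x, neg x} = {(⊥ : P)} ∧ upperCone {x, neg x} = {(⊤ : P)})
    (hhs : IsHorizontalSum neg B) {i : I} {b : P} :
    upperConeIn (B i) {b, neg b} = {(⊤ : P)} := by
  ext v
  simp only [Set.mem_singleton_iff]
  constructor
  · rintro ⟨_, hv⟩
    have h : v ∈ upperCone {b, neg b} := fun t ht => hv t ht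
    rw [(hcomp b).2] at h
    exact h
  · rintro rfl
    exact ⟨(hhs.1 i).2.1, fun t _ => le_top⟩

/-- In a Boolean block, upper bounds (within the block) of `L(a,b) ∪ L(a,b')` lie above `a`. -/
lemma compat_in_block
    (hcomp : ∀ x : P, lowerCone {x, neg x} = {(⊥ : P)} ∧ upperCone {x, neg x} = {(⊤ : P)})
    (hhs : IsHorizontalSum neg B) (hbool : ∀ i, IsBooleanOn (B i) neg)
    {i : I} {a b u : P} (ha : a ∈ B i) (hb : b ∈ B i) (hu : u ∈ B i)
    (h1 : ∀ c : P, c ≤ a → c ≤ b → c ≤ u) (h2 : ∀ c : P, c ≤ a → c ≤ neg b → c ≤ u) :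
    a ≤ u := by
  have hnb : neg b ∈ B i := (hhs.1 i).2.2 b hb
  have hd := (hbool i).1 b hb (neg b) hnb a ha
  rw [ucIn_pair_top hcomp hhs] at hd
  have haL : a ∈ lowerConeIn (B i) ({(⊤ : P)} ∪ {a}) := by
    refine ⟨ha, ?_⟩
    rintro t (rfl | rfl)
    · exact le_top
    · exact le_rfl
  rw [hd] at haL
  apply haL.2
  refine ⟨hu, ?_⟩
  rintro c (hc | hc)
  · exact h1 c (hc.2 a (Or.inr rfl)) (hc.2 b (Or.inl rfl))
  · exact h2 c (hc.2 a (Or.inr rfl)) (hc.2 (neg b) (Or.inl rfl))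

/-- If `x` and `y` are nontrivial elements of a common Boolean block, there is a nontrivial
lower bound of `{x,y}` or of `{x',y}`. -/
lemma exists_nontrivial_lb
    (hcomp : ∀ x : P, lowerCone {x, neg x} = {(⊥ : P)} ∧ upperCone {x, neg x} = {(⊤ : P)})
    (hhs : IsHorizontalSum neg B) (hbool : ∀ i, IsBooleanOn (B i) neg)
    {i : I} {x y : P} (hx : x ∈ B i) (hy : y ∈ B i) (hy0 : y ≠ ⊥) :
    ∃ c ∈ B i, c ≠ ⊥ ∧ ((c ≤ x ∧ c ≤ y) ∨ (c ≤ neg x ∧ c ≤ y)) := by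
  by_contra hcon
  push_neg at hcon
  have hnx : neg x ∈ B i := (hhs.1 i).2.2 x hx
  have hd := (hbool i).1 x hx (neg x) hnx y hy
  rw [ucIn_pair_top hcomp hhs] at hd
  have hyL : y ∈ lowerConeIn (B i) ({(⊤ : P)} ∪ {y}) := by
    refine ⟨hy, ?_⟩
    rintro t (rfl | rfl)
    · exact le_top
    · exact le_rfl
  rw [hd] at hyL
  have hbotU : (⊥ : P) ∈ upperConeIn (B i)
      (lowerConeIn (B i) {x, y} ∪ lowerConeIn (B i) {neg x, y}) := by
    refine ⟨(hhs.1 i).1, ?_⟩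
    rintro c (hc | hc)
    · by_cases hc0 : c = ⊥
      · exact hc0 ▸ le_rfl
      · exact absurd (hc.2 y (Or.inr rfl)) ((hcon c hc.1 hc0).1 (hc.2 x (Or.inl rfl)))
    · by_cases hc0 : c = ⊥
      · exact hc0 ▸ le_rfl
      · exact absurd (hc.2 y (Or.inr rfl)) ((hcon c hc.1 hc0).2 (hc.2 (neg x) (Or.inl rfl)))
  exact hy0 (le_bot_iff.mp (hyL.2 ⊥ hbotU))

/-- Common-block nontrivial case: the commutator is `{⊤}`. -/
lemma commSet_common_block
    (hinv : ∀ x : P, neg (neg x) = x)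
    (hcomp : ∀ x : P, lowerCone {x, neg x} = {(⊥ : P)} ∧ upperCone {x, neg x} = {(⊤ : P)})
    (hhs : IsHorizontalSum neg B) (hbool : ∀ i, IsBooleanOn (B i) neg)
    {i : I} {x y : P} (hx : x ∈ B i) (hy : y ∈ B i)
    (hx0 : x ≠ ⊥) (hx1 : x ≠ ⊤) (hy0 : y ≠ ⊥) :
    commSet neg x y = {⊤} := by
  have hnx : neg x ∈ B i := (hhs.1 i).2.2 x hx
  have huc : upperCone (lowerCone {x, y} ∪ lowerCone {x, neg y} ∪ lowerCone {neg x, y}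
      ∪ lowerCone {neg x, neg y}) = {⊤} := by
    ext u
    simp only [Set.mem_singleton_iff]
    constructor
    · intro hu
      rw [mem_uc4] at hu
      obtain ⟨s, hsB, hs0, hsle⟩ := exists_nontrivial_lb hcomp hhs hbool hx hy hy0
      have hsu : s ≤ u := by
        rcases hsle with ⟨h1, h2⟩ | ⟨h1, h2⟩
        · exact hu s (Or.inl ⟨h1, h2⟩)
        · exact hu s (Or.inr (Or.inr (Or.inl ⟨h1, h2⟩)))
      have hs1 : s ≠ ⊤ := by
        rcases hsle with ⟨h1, _⟩ | ⟨h1, _⟩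
        · rintro rfl
          exact hx1 (top_le_iff.mp h1)
        · rintro rfl
          apply hx0
          have hxt : neg x = ⊤ := top_le_iff.mp h1
          rw [← hinv x, hxt, neg_top_eq hcomp]
      have huB : u ∈ B i := block_of_comparable hhs hsB hs0 hs1 (Or.inl hsu)
      have hxu : x ≤ u := by
        apply compat_in_block hcomp hhs hbool hx hy huB
        · intro c h1 h2
          exact hu c (Or.inl ⟨h1, h2⟩)
        · intro c h1 h2
          exact hu c (Or.inr (Or.inl ⟨h1, h2⟩))
      have hnxu : neg x ≤ u := by
        apply compat_in_block hcomp hhs hbool hnx hy huB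
        · intro c h1 h2
          exact hu c (Or.inr (Or.inr (Or.inl ⟨h1, h2⟩)))
        · intro c h1 h2
          exact hu c (Or.inr (Or.inr (Or.inr ⟨h1, h2⟩)))
      exact eq_top_of_double hcomp u x hxu hnxu
    · rintro rfl
      rw [mem_uc4]
      intro c _
      exact le_top
  rw [commSet, huc, minSet_singleton]

/-- Different-block nontrivial case: the commutator is `{⊥}`. -/
lemma commSet_diff_block
    (hinv : ∀ x : P, neg (neg x) = x)
    (hcomp : ∀ x : P, lowerCone {x, neg x} = {(⊥ : P)} ∧ upperCone {x, neg x} = {(⊤ : P)})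
    (hhs : IsHorizontalSum neg B)
    {x y : P} (hx0 : x ≠ ⊥) (hx1 : x ≠ ⊤) (hy0 : y ≠ ⊥) (hy1 : y ≠ ⊤)
    (hnc : ¬ ∃ i, x ∈ B i ∧ y ∈ B i) :
    commSet neg x y = {⊥} := by
  have hnx1 : neg x ≠ ⊤ := by
    intro h
    exact hx0 (by rw [← hinv x, h, neg_top_eq hcomp])
  have hnc2 : ¬ ∃ i, x ∈ B i ∧ neg y ∈ B i := by
    rintro ⟨i, h1, h2⟩
    exact hnc ⟨i, h1, by have h3 := (hhs.1 i).2.2 (neg y) h2; rwa [hinv] at h3⟩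
  have hnc3 : ¬ ∃ i, neg x ∈ B i ∧ y ∈ B i := by
    rintro ⟨i, h1, h2⟩
    exact hnc ⟨i, by have h3 := (hhs.1 i).2.2 (neg x) h1; rwa [hinv] at h3, h2⟩
  have hnc4 : ¬ ∃ i, neg x ∈ B i ∧ neg y ∈ B i := by
    rintro ⟨i, h1, h2⟩
    refine hnc ⟨i, ?_, ?_⟩
    · have h3 := (hhs.1 i).2.2 (neg x) h1; rwa [hinv] at h3
    · have h3 := (hhs.1 i).2.2 (neg y) h2; rwa [hinv] at h3
  have key : ∀ a b c : P, (¬ ∃ i, a ∈ B i ∧ b ∈ B i) → a ≠ ⊤ → c ≤ a → c ≤ b → c = ⊥ := by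
    intro a b c hab ha1 hca hcb
    by_cases hc0 : c = ⊥
    · exact hc0
    exfalso
    by_cases hc1 : c = ⊤
    · subst hc1
      exact ha1 (top_le_iff.mp hca)
    obtain ⟨j, hcj, haj⟩ := share_block hhs hca
    obtain ⟨k, hck, hbk⟩ := share_block hhs hcb
    by_cases hjk : j = k
    · exact hab ⟨j, haj, hjk ▸ hbk⟩
    · have hm : c ∈ B j ∩ B k := ⟨hcj, hck⟩
      rw [hhs.2.2.1 j k hjk] at hm
      rcases hm with h | h
      · exact hc0 h
      · exact hc1 h
  have hS : (lowerCone {x, y} ∪ lowerCone {x, neg y} ∪ lowerCone {neg x, y}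
      ∪ lowerCone {neg x, neg y}) = {(⊥ : P)} := by
    ext c
    simp only [Set.mem_union, Set.mem_singleton_iff]
    constructor
    · rintro (((hc | hc) | hc) | hc)
      · rw [mem_lc_pair] at hc
        exact key x y c hnc hx1 hc.1 hc.2
      · rw [mem_lc_pair] at hc
        exact key x (neg y) c hnc2 hx1 hc.1 hc.2
      · rw [mem_lc_pair] at hc
        exact key (neg x) y c hnc3 hnx1 hc.1 hc.2
      · rw [mem_lc_pair] at hc
        exact key (neg x) (neg y) c hnc4 hnx1 hc.1 hc.2
    · rintro rfl
      exact Or.inl (Or.inl (Or.inl (mem_lc_pair.mpr ⟨bot_le, bot_le⟩)))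
  have hU : upperCone ({(⊥ : P)} : Set P) = Set.univ := by
    ext u
    simp only [upperCone, Set.mem_setOf_eq, Set.mem_univ, iff_true]
    rintro a rfl
    exact bot_le
  rw [commSet, hS, hU, minSet_univ]

lemma comm_dichotomy
    (hinv : ∀ x : P, neg (neg x) = x)
    (hcomp : ∀ x : P, lowerCone {x, neg x} = {(⊥ : P)} ∧ upperCone {x, neg x} = {(⊤ : P)})
    (hhs : IsHorizontalSum neg B) (hbool : ∀ i, IsBooleanOn (B i) neg)
    (x y : P) : commSet neg x y = {⊤} ∨ commSet neg x y = {⊥} := by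
  by_cases hx : x = ⊥ ∨ x = ⊤
  · exact Or.inl (commSet_left_trivial hcomp x y hx)
  by_cases hy : y = ⊥ ∨ y = ⊤
  · exact Or.inl (commSet_right_trivial hcomp x y hy)
  push_neg at hx hy
  by_cases hc : ∃ i, x ∈ B i ∧ y ∈ B i
  · obtain ⟨i, hxi, hyi⟩ := hc
    exact Or.inl (commSet_common_block hinv hcomp hhs hbool hxi hyi hx.1 hx.2 hy.1)
  · exact Or.inr (commSet_diff_block hinv hcomp hhs hx.1 hx.2 hy.1 hy.2 hc)

end Main

/-- A horizontal sum of Boolean posets satisfies the identity `c(c(x,y),z) = {1}`. -/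
theorem stmt17 {P I : Type*} [PartialOrder P] [BoundedOrder P]
    (neg : P → P) (B : I → Set P)
    (hinv : ∀ x : P, neg (neg x) = x)
    (hanti : ∀ x y : P, x ≤ y → neg y ≤ neg x)
    (hcomp : ∀ x : P, lowerCone {x, neg x} = {(⊥ : P)} ∧ upperCone {x, neg x} = {(⊤ : P)})
    (hhs : IsHorizontalSum neg B)
    (hbool : ∀ i, IsBooleanOn (B i) neg) :
    ∀ x y z : P, commSetSet neg (commSet neg x y) {z} = {(⊤ : P)} := by
  intro x y z
  rcases comm_dichotomy hinv hcomp hhs hbool x y with h | h <;>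
    rw [commSetSet, h] <;> simp only [Set.biUnion_singleton]
  · exact commSet_left_trivial hcomp ⊤ z (Or.inr rfl)
  · exact commSet_left_trivial hcomp ⊥ z (Or.inl rfl)
end

section
/- Let (P,≤,',0,1) be a bounded poset with an antitone involution ' that is a complementation which is the horizontal sum of subsets (B_i)_{i∈I}, each of which (with the induced order, restricted involution, and bounds 0,1) is a Boolean poset, and let a,b,c ∈ P. Define t(a,b,c) := Min U( L({w' : w∈c(a,b)} ∪ {a}) ∪ L(c(a,b) ∪ {c}) ). Then t(a,b,c)={c} if a C b, and t(a,b,c)={a} otherwise. -/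
/-- The ternary term `t(x,y,z) = Min U( L((c(x,y))' ∪ {x}) ∪ L(c(x,y) ∪ {z}) )`. -/
def ternary {P : Type*} [PartialOrder P] (neg : P → P) (x y z : P) : Set P :=
  minSet (upperCone
    (lowerCone ((neg '' commSet neg x y) ∪ {x}) ∪ lowerCone (commSet neg x y ∪ {z})))

section MyAux
variable {P : Type*} [PartialOrder P]

lemma myUpperCone_Iic (a : P) : upperCone (Set.Iic a) = Set.Ici a := by
  ext z
  constructor
  · intro h; exact h a le_rfl
  · intro h s hs; exact le_trans hs h

lemma myMinSet_Ici (a : P) : minSet (Set.Ici a) = {a} := by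
  ext x
  simp only [minSet, Set.mem_setOf_eq, Set.mem_Ici, Set.mem_singleton_iff]
  constructor
  · rintro ⟨hax, hmin⟩
    exact (hmin a (le_refl a) hax).symm
  · rintro rfl
    exact ⟨le_rfl, fun y hy hyx => le_antisymm hyx hy⟩

end MyAux


section MyAux2
variable {P : Type*} [Preorder P]

lemma myMem_lowerCone_singleton {x z : P} (h : z ≤ x) : z ∈ lowerCone {x} := by
  intro w hw; rcases hw with rfl; exact h

lemma myMem_upperCone_singleton {x z : P} (h : x ≤ z) : z ∈ upperCone {x} := by
  intro w hw; rcases hw with rfl; exact h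

lemma myMem_lowerCone_pair {x y z : P} (h1 : z ≤ x) (h2 : z ≤ y) : z ∈ lowerCone {x, y} := by
  intro w hw; rcases hw with rfl | rfl; exacts [h1, h2]

lemma myMem_upperCone_pair {x y z : P} (h1 : x ≤ z) (h2 : y ≤ z) : z ∈ upperCone {x, y} := by
  intro w hw; rcases hw with rfl | rfl; exacts [h1, h2]

lemma myMem_lowerCone_union_singletons {x y z : P} (h1 : z ≤ x) (h2 : z ≤ y) :
    z ∈ lowerCone (({x} : Set P) ∪ {y}) := by
  intro w hw; rcases hw with rfl | rfl; exacts [h1, h2]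

lemma myMem_upperCone_union_singletons {x y z : P} (h1 : x ≤ z) (h2 : y ≤ z) :
    z ∈ upperCone (({x} : Set P) ∪ {y}) := by
  intro w hw; rcases hw with rfl | rfl; exacts [h1, h2]

end MyAux2

/-- On a horizontal sum of Boolean posets the term `t` behaves like the ternary
discriminator: `t(a,b,c) = {c}` if `a C b` and `t(a,b,c) = {a}` otherwise. -/
theorem stmt18 {P I : Type*} [PartialOrder P] [BoundedOrder P]
    (neg : P → P) (B : I → Set P)
    (hinv : ∀ x : P, neg (neg x) = x)
    (hanti : ∀ x y : P, x ≤ y → neg y ≤ neg x)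
    (hcomp : ∀ x : P, lowerCone {x, neg x} = {(⊥ : P)} ∧ upperCone {x, neg x} = {(⊤ : P)})
    (hhs : IsHorizontalSum neg B)
    (hbool : ∀ i, IsBooleanOn (B i) neg)
    (a b c : P) :
    (Compat neg a b → ternary neg a b c = {c}) ∧
    (¬ Compat neg a b → ternary neg a b c = {a}) := by
  obtain ⟨hblocks, hcover, hdisj, hincomp⟩ := hhs
  have negbot : neg (⊥ : P) = ⊤ := by
    have h := (hcomp ⊥).2
    have hm : neg (⊥ : P) ∈ upperCone {(⊥ : P), neg ⊥} := myMem_upperCone_pair bot_le le_rfl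
    rw [h] at hm
    exact hm
  have negtop : neg (⊤ : P) = ⊥ := by rw [← negbot, hinv]
  have hmemneg : ∀ i, ∀ x, x ∈ B i → neg x ∈ B i := fun i x hx => (hblocks i).2.2 x hx
  have hmemneg' : ∀ i, ∀ x : P, neg x ∈ B i → x ∈ B i := by
    intro i x hx
    have := hmemneg i (neg x) hx
    rwa [hinv] at this
  have hexists : ∀ x : P, ∃ i, x ∈ B i := by
    intro x
    have : x ∈ ⋃ i, B i := hcover ▸ Set.mem_univ x
    simpa using this
  have hcommon_of_le : ∀ x y : P, x ≤ y → ∃ i, x ∈ B i ∧ y ∈ B i := by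
    intro x y hxy
    by_contra h
    exact (hincomp x y h).1 hxy
  have huniq : ∀ {x : P} {i j : I}, x ∈ B i → x ∈ B j → x ≠ ⊥ → x ≠ ⊤ → i = j := by
    intro x i j hi hj hb ht
    by_contra hij
    have hx : x ∈ ({⊥, ⊤} : Set P) := (hdisj i j hij) ▸ ⟨hi, hj⟩
    rcases hx with h | h
    · exact hb h
    · exact ht h
  have hblock_le : ∀ {x y : P} {i : I}, x ≤ y → y ∈ B i → y ≠ ⊥ → y ≠ ⊤ → x ∈ B i := by
    intro x y i hxy hyi hb ht
    obtain ⟨j, hxj, hyj⟩ := hcommon_of_le x y hxy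
    rwa [huniq hyj hyi hb ht] at hxj
  have hblock_ge : ∀ {x y : P} {i : I}, y ≤ x → y ∈ B i → y ≠ ⊥ → y ≠ ⊤ → x ∈ B i := by
    intro x y i hxy hyi hb ht
    obtain ⟨j, hyj, hxj⟩ := hcommon_of_le y x hxy
    rwa [huniq hyj hyi hb ht] at hxj
  have hLbot : ∀ x y : P, (¬ ∃ i, x ∈ B i ∧ y ∈ B i) → lowerCone {x, y} = {⊥} := by
    intro x y hno
    ext z
    constructor
    · intro hz
      have hzx : z ≤ x := hz x (Or.inl rfl)
      have hzy : z ≤ y := hz y (Or.inr rfl)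
      obtain ⟨j, hzj, hxj⟩ := hcommon_of_le z x hzx
      obtain ⟨k, hzk, hyk⟩ := hcommon_of_le z y hzy
      have hjk : j ≠ k := fun h => hno ⟨k, h ▸ hxj, hyk⟩
      have hz2 : z ∈ ({⊥, ⊤} : Set P) := (hdisj j k hjk) ▸ ⟨hzj, hzk⟩
      rcases hz2 with h | h
      · exact h
      · exfalso
        have hx : x = ⊤ := top_le_iff.mp (h ▸ hzx)
        obtain ⟨i, hyi⟩ := hexists y
        exact hno ⟨i, hx ▸ (hblocks i).2.1, hyi⟩
    · rintro rfl
      exact myMem_lowerCone_pair bot_le bot_le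
  have compat_easy : ∀ x y : P, (x ≤ y ∨ x ≤ neg y) → Compat neg x y := by
    intro x y h
    have hxS : x ∈ lowerCone {x, y} ∪ lowerCone {x, neg y} := by
      rcases h with h | h
      · exact Or.inl (myMem_lowerCone_pair le_rfl h)
      · exact Or.inr (myMem_lowerCone_pair le_rfl h)
    ext z
    constructor
    · intro hz s hs
      have hsx : s ≤ x := by
        rcases hs with h' | h'
        · exact h' x (Or.inl rfl)
        · exact h' x (Or.inl rfl)
      exact le_trans hsx (hz x rfl)
    · intro hz
      exact myMem_upperCone_singleton (hz x hxS)
  have key : ∀ x y : P, ∀ i : I, x ∈ B i → y ∈ B i → x ≠ ⊥ → x ≠ ⊤ → y ≠ ⊥ → y ≠ ⊤ →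
      Compat neg x y := by
    intro x y i hxi hyi hxb hxt hyb hyt
    have hnyi : neg y ∈ B i := hmemneg i y hyi
    have hSsub : ∀ s, s ∈ lowerCone {x, y} ∪ lowerCone {x, neg y} → s ≤ x ∧ s ∈ B i := by
      intro s hs
      have hsx : s ≤ x := by
        rcases hs with h | h
        · exact h x (Or.inl rfl)
        · exact h x (Or.inl rfl)
      exact ⟨hsx, hblock_le hsx hxi hxb hxt⟩
    have hdist := (hbool i).1 y hyi (neg y) hnyi x hxi
    have hU : upperConeIn (B i) {y, neg y} = {(⊤ : P)} := by
      ext z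
      constructor
      · rintro ⟨hzB, hz⟩
        have hz' : z ∈ upperCone {y, neg y} := hz
        rw [(hcomp y).2] at hz'
        exact hz'
      · rintro rfl
        exact ⟨(hblocks i).2.1, fun w hw => le_top⟩
    have hLx : lowerConeIn (B i) (upperConeIn (B i) {y, neg y} ∪ {x}) = lowerCone {x} := by
      rw [hU]
      ext z
      constructor
      · rintro ⟨hzB, hz⟩
        exact myMem_lowerCone_singleton (hz x (Or.inr rfl))
      · intro hz
        have hzx : z ≤ x := hz x rfl
        exact ⟨hblock_le hzx hxi hxb hxt, myMem_lowerCone_union_singletons le_top hzx⟩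
    have hS1 : lowerConeIn (B i) {y, x} = lowerCone {x, y} := by
      ext z
      constructor
      · rintro ⟨hzB, hz⟩
        exact myMem_lowerCone_pair (hz x (Or.inr rfl)) (hz y (Or.inl rfl))
      · intro hz
        have hzx : z ≤ x := hz x (Or.inl rfl)
        exact ⟨hblock_le hzx hxi hxb hxt, myMem_lowerCone_pair (hz y (Or.inr rfl)) hzx⟩
    have hS2 : lowerConeIn (B i) {neg y, x} = lowerCone {x, neg y} := by
      ext z
      constructor
      · rintro ⟨hzB, hz⟩
        exact myMem_lowerCone_pair (hz x (Or.inr rfl)) (hz (neg y) (Or.inl rfl))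
      · intro hz
        have hzx : z ≤ x := hz x (Or.inl rfl)
        exact ⟨hblock_le hzx hxi hxb hxt, myMem_lowerCone_pair (hz (neg y) (Or.inr rfl)) hzx⟩
    rw [hLx, hS1, hS2] at hdist
    ext z
    constructor
    · intro hz s hs
      exact le_trans (hSsub s hs).1 (hz x rfl)
    · intro hz
      apply myMem_upperCone_singleton
      by_cases hcase : ∃ s ∈ lowerCone {x, y} ∪ lowerCone {x, neg y}, s ≠ ⊥ ∧ s ≠ ⊤
      · obtain ⟨s, hsS, hsb, hst⟩ := hcase
        have hsB : s ∈ B i := (hSsub s hsS).2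
        have hzB : z ∈ B i := hblock_ge (hz s hsS) hsB hsb hst
        have hzU : z ∈ upperConeIn (B i) (lowerCone {x, y} ∪ lowerCone {x, neg y}) :=
          ⟨hzB, fun s hs => hz s hs⟩
        have hxmem : x ∈ lowerCone {x} := myMem_lowerCone_singleton le_rfl
        rw [hdist] at hxmem
        exact hxmem.2 z hzU
      · exfalso
        push_neg at hcase
        have hSbot : ∀ s ∈ lowerCone {x, y} ∪ lowerCone {x, neg y}, s = ⊥ := by
          intro s hs
          by_contra hsb
          have hst := hcase s hs hsb
          exact hxt (top_le_iff.mp (hst ▸ (hSsub s hs).1))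
        have hbU : (⊥ : P) ∈ upperConeIn (B i) (lowerCone {x, y} ∪ lowerCone {x, neg y}) :=
          ⟨(hblocks i).1, fun s hs => (hSbot s hs) ▸ le_rfl⟩
        have hxmem : x ∈ lowerCone {x} := myMem_lowerCone_singleton le_rfl
        rw [hdist] at hxmem
        exact hxb (le_bot_iff.mp (hxmem.2 ⊥ hbU))
  have compat_of_common : ∀ x y : P, (∃ i, x ∈ B i ∧ y ∈ B i) → Compat neg x y := by
    rintro x y ⟨i, hxi, hyi⟩
    rcases eq_or_ne x ⊥ with rfl | hxb
    · exact compat_easy ⊥ y (Or.inl bot_le)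
    rcases eq_or_ne y ⊥ with rfl | hyb
    · exact compat_easy x ⊥ (Or.inr (negbot ▸ le_top))
    rcases eq_or_ne y ⊤ with rfl | hyt
    · exact compat_easy x ⊤ (Or.inl le_top)
    rcases eq_or_ne x ⊤ with rfl | hxt
    · ext z
      constructor
      · intro hz s hs
        exact le_trans le_top (hz ⊤ rfl)
      · intro hz
        apply myMem_upperCone_singleton
        have hy : y ≤ z := hz y (Or.inl (myMem_lowerCone_pair le_top le_rfl))
        have hny : neg y ≤ z := hz (neg y) (Or.inr (myMem_lowerCone_pair le_top le_rfl))
        have hm : z ∈ upperCone {y, neg y} := myMem_upperCone_pair hy hny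
        rw [(hcomp y).2] at hm
        have hzt : z = ⊤ := hm
        exact hzt.ge
    · exact key x y i hxi hyi hxb hxt hyb hyt
  have common_of_compat : ∀ x y : P, Compat neg x y → ∃ i, x ∈ B i ∧ y ∈ B i := by
    intro x y hC
    by_contra hno
    rcases eq_or_ne x ⊥ with rfl | hxb
    · obtain ⟨i, hyi⟩ := hexists y
      exact hno ⟨i, (hblocks i).1, hyi⟩
    have hno' : ¬ ∃ i, x ∈ B i ∧ neg y ∈ B i := by
      rintro ⟨i, h1, h2⟩
      exact hno ⟨i, h1, hmemneg' i y h2⟩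
    have h1 := hLbot x y hno
    have h2 := hLbot x (neg y) hno'
    rw [Compat, h1, h2] at hC
    have hb : (⊥ : P) ∈ upperCone (({⊥} : Set P) ∪ {⊥}) :=
      myMem_upperCone_union_singletons le_rfl le_rfl
    rw [← hC] at hb
    exact hxb (le_bot_iff.mp (hb x rfl))
  have comm_compat : Compat neg a b → commSet neg a b = {⊤} := by
    intro hC
    obtain ⟨i, hai, hbi⟩ := common_of_compat a b hC
    have hC' : Compat neg (neg a) b := compat_of_common _ _ ⟨i, hmemneg i a hai, hbi⟩
    have hU : upperCone (lowerCone {a, b} ∪ lowerCone {a, neg b} ∪ lowerCone {neg a, b}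
        ∪ lowerCone {neg a, neg b}) = Set.Ici (⊤ : P) := by
      ext z
      constructor
      · intro hz
        have hz1 : z ∈ upperCone (lowerCone {a, b} ∪ lowerCone {a, neg b}) := by
          intro s hs
          apply hz
          rcases hs with h | h
          · exact Or.inl (Or.inl (Or.inl h))
          · exact Or.inl (Or.inl (Or.inr h))
        have hz2 : z ∈ upperCone (lowerCone {neg a, b} ∪ lowerCone {neg a, neg b}) := by
          intro s hs
          apply hz
          rcases hs with h | h
          · exact Or.inl (Or.inr h)
          · exact Or.inr h
        rw [← hC] at hz1
        rw [← hC'] at hz2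
        have ha : a ≤ z := hz1 a rfl
        have hna : neg a ≤ z := hz2 (neg a) rfl
        have hm : z ∈ upperCone {a, neg a} := myMem_upperCone_pair ha hna
        rw [(hcomp a).2] at hm
        have hzt : z = ⊤ := hm
        exact hzt.ge
      · intro hz s hs
        exact le_trans le_top hz
    rw [commSet, hU, myMinSet_Ici]
  have comm_noncompat : ¬ Compat neg a b → commSet neg a b = {⊥} := by
    intro hnc
    have hno : ¬ ∃ i, a ∈ B i ∧ b ∈ B i := fun h => hnc (compat_of_common a b h)
    have hno2 : ¬ ∃ i, a ∈ B i ∧ neg b ∈ B i := by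
      rintro ⟨i, h1, h2⟩; exact hno ⟨i, h1, hmemneg' i b h2⟩
    have hno3 : ¬ ∃ i, neg a ∈ B i ∧ b ∈ B i := by
      rintro ⟨i, h1, h2⟩; exact hno ⟨i, hmemneg' i a h1, h2⟩
    have hno4 : ¬ ∃ i, neg a ∈ B i ∧ neg b ∈ B i := by
      rintro ⟨i, h1, h2⟩; exact hno ⟨i, hmemneg' i a h1, hmemneg' i b h2⟩
    rw [commSet, hLbot a b hno, hLbot a (neg b) hno2, hLbot (neg a) b hno3,
      hLbot (neg a) (neg b) hno4]
    have hU : (({⊥} : Set P) ∪ {⊥} ∪ {⊥} ∪ {⊥}) = {⊥} := by simp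
    rw [hU]
    have hB : upperCone ({⊥} : Set P) = Set.Ici (⊥ : P) := by
      ext z
      constructor
      · intro h
        exact h ⊥ rfl
      · intro h
        exact myMem_upperCone_singleton h
    rw [hB, myMinSet_Ici]
  constructor
  · intro hC
    rw [ternary, comm_compat hC]
    have himg : neg '' ({⊤} : Set P) = {⊥} := by rw [Set.image_singleton, negtop]
    rw [himg]
    have h1 : lowerCone (({⊥} : Set P) ∪ {a}) = {⊥} := by
      ext z
      constructor
      · intro hz
        exact le_bot_iff.mp (hz ⊥ (Or.inl rfl))
      · rintro rfl
        exact myMem_lowerCone_union_singletons le_rfl bot_le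
    have h2 : lowerCone (({⊤} : Set P) ∪ {c}) = Set.Iic c := by
      ext z
      constructor
      · intro hz
        exact hz c (Or.inr rfl)
      · intro hz
        exact myMem_lowerCone_union_singletons le_top hz
    rw [h1, h2]
    have h3 : ({⊥} : Set P) ∪ Set.Iic c = Set.Iic c :=
      Set.union_eq_self_of_subset_left (by simp)
    rw [h3, myUpperCone_Iic, myMinSet_Ici]
  · intro hnc
    rw [ternary, comm_noncompat hnc]
    have himg : neg '' ({⊥} : Set P) = {⊤} := by rw [Set.image_singleton, negbot]
    rw [himg]
    have h1 : lowerCone (({⊤} : Set P) ∪ {a}) = Set.Iic a := by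
      ext z
      constructor
      · intro hz
        exact hz a (Or.inr rfl)
      · intro hz
        exact myMem_lowerCone_union_singletons le_top hz
    have h2 : lowerCone (({⊥} : Set P) ∪ {c}) = {⊥} := by
      ext z
      constructor
      · intro hz
        exact le_bot_iff.mp (hz ⊥ (Or.inl rfl))
      · rintro rfl
        exact myMem_lowerCone_union_singletons le_rfl bot_le
    rw [h1, h2]
    have h3 : Set.Iic a ∪ ({⊥} : Set P) = Set.Iic a :=
      Set.union_eq_self_of_subset_right (by simp)
    rw [h3, myUpperCone_Iic, myMinSet_Ici]
end
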